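/- arXiv:2601.10390 — 9 statements merged into one kernel-verified Lean document; each statement's English description precedes it below -/
import Mathlib

section
/- Assume F(D) ≠ ∅ and fix (z, r) ∈ Z × ℝ. The following are equivalent: (i) (z, r) ∉ N; (ii) there exist (w, β) ∈ W × ℝ and γ ∈ ℝ such that ⟨(z', r'), (w, β)⟩ ≤ γ < ⟨(z, r), (w, β)⟩ for all (z', r') ∈ H; (iii) there exists (w, β) ∈ W × ℝ such that ⟨(z', r') − (z, r), (w, β)⟩ < 0 for all (z', r') ∈ H. -/
open Set Filter

theorem separation_characterization_N
    {X Y Z W : Type*} [AddCommGroup X] [Module ℝ X] [AddCommGroup Y] [Module ℝ Y]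
    [AddCommGroup Z] [Module ℝ Z] [AddCommGroup W] [Module ℝ W]
    (pX : X →ₗ[ℝ] Y →ₗ[ℝ] ℝ) (pZ : Z →ₗ[ℝ] W →ₗ[ℝ] ℝ)
    (A : X →ₗ[ℝ] Z) (Astar : W →ₗ[ℝ] Y)
    (hadj : ∀ (x : X) (w : W), pX x (Astar w) = pZ (A x) w)
    (P : Set X) (Q : Set Z)
    (hPne : P.Nonempty)
    (hPcone : ∀ s t : ℝ, 0 ≤ s → 0 ≤ t → ∀ u ∈ P, ∀ v ∈ P, s • u + t • v ∈ P)
    (hQne : Q.Nonempty)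
    (hQcone : ∀ s t : ℝ, 0 ≤ s → 0 ≤ t → ∀ u ∈ Q, ∀ v ∈ Q, s • u + t • v ∈ Q)
    (b : Z) (c : Y)
    (Pstar : Set Y) (hPstar : Pstar = {y : Y | ∀ x ∈ P, 0 ≤ pX x y})
    (Qstar : Set W) (hQstar : Qstar = {w : W | ∀ z ∈ Q, 0 ≤ pZ z w})
    (FP : Set X) (hFP : FP = {x ∈ P | A x - b ∈ Q})
    (FD : Set W) (hFD : FD = {w ∈ Qstar | c - Astar w ∈ Pstar})
    (Hset : Set (Z × ℝ))
    (hH : Hset = {p : Z × ℝ | ∃ x ∈ P, ∃ q ∈ Q, p.1 = A x - b - q ∧ pX x c ≤ p.2})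
    (Nset : Set (Z × ℝ))
    (hN : Nset = {p : Z × ℝ | ∀ w ∈ FD, pZ (b + p.1) w ≤ p.2})
    (hFDne : FD.Nonempty) (z : Z) (r : ℝ) :
    ((z, r) ∉ Nset ↔
      ∃ (w : W) (β γ : ℝ),
        (∀ p ∈ Hset, pZ p.1 w + p.2 * β ≤ γ) ∧ γ < pZ z w + r * β) ∧
    ((∃ (w : W) (β γ : ℝ),
        (∀ p ∈ Hset, pZ p.1 w + p.2 * β ≤ γ) ∧ γ < pZ z w + r * β) ↔
      ∃ (w : W) (β : ℝ), ∀ p ∈ Hset, pZ (p.1 - z) w + (p.2 - r) * β < 0) := by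
  obtain ⟨u0, hu0⟩ := hPne
  obtain ⟨v0, hv0⟩ := hQne
  have h0P : (0:X) ∈ P := by simpa using hPcone 0 0 le_rfl le_rfl u0 hu0 u0 hu0
  have h0Q : (0:Z) ∈ Q := by simpa using hQcone 0 0 le_rfl le_rfl v0 hv0 v0 hv0
  have hsP : ∀ t : ℝ, 0 ≤ t → ∀ u ∈ P, t • u ∈ P := fun t ht u hu => by
    simpa using hPcone t 0 ht le_rfl u hu u hu
  have hsQ : ∀ t : ℝ, 0 ≤ t → ∀ u ∈ Q, t • u ∈ Q := fun t ht u hu => by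
    simpa using hQcone t 0 ht le_rfl u hu u hu
  have hmemH : ∀ x ∈ P, ∀ q ∈ Q, ∀ s : ℝ, pX x c ≤ s → ((A x - b - q, s) : Z × ℝ) ∈ Hset := by
    intro x hx q hq s hs
    rw [hH]; exact ⟨x, hx, q, hq, rfl, hs⟩
  -- (i) → (ii)
  have ii_of_i : (z, r) ∉ Nset →
      ∃ (w : W) (β γ : ℝ),
        (∀ p ∈ Hset, pZ p.1 w + p.2 * β ≤ γ) ∧ γ < pZ z w + r * β := by
    intro hnN
    rw [hN, Set.mem_setOf_eq] at hnN
    push_neg at hnN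
    obtain ⟨w, hwFD, hr⟩ := hnN
    rw [hFD] at hwFD
    obtain ⟨hwQ, hwP⟩ := hwFD
    rw [hQstar] at hwQ
    rw [hPstar] at hwP
    refine ⟨w, -1, -(pZ b w), ?_, ?_⟩
    · intro p hp
      rw [hH, Set.mem_setOf_eq] at hp
      obtain ⟨x, hx, q, hq, hp1, hp2⟩ := hp
      have hq' : 0 ≤ pZ q w := hwQ q hq
      have hx' : 0 ≤ pX x (c - Astar w) := hwP x hx
      rw [map_sub] at hx'
      rw [hadj] at hx'
      rw [hp1]
      simp only [map_sub, LinearMap.sub_apply]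
      linarith
    · simp only [map_add, LinearMap.add_apply] at hr
      linarith
  -- (ii) → (iii)
  have iii_of_ii :
      (∃ (w : W) (β γ : ℝ),
        (∀ p ∈ Hset, pZ p.1 w + p.2 * β ≤ γ) ∧ γ < pZ z w + r * β) →
      ∃ (w : W) (β : ℝ), ∀ p ∈ Hset, pZ (p.1 - z) w + (p.2 - r) * β < 0 := by
    rintro ⟨w, β, γ, hsep, hlt⟩
    refine ⟨w, β, fun p hp => ?_⟩
    have := hsep p hp
    simp only [map_sub, LinearMap.sub_apply]
    nlinarith
  -- (iii) → (ii)
  have ii_of_iii :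
      (∃ (w : W) (β : ℝ), ∀ p ∈ Hset, pZ (p.1 - z) w + (p.2 - r) * β < 0) →
      ∃ (w : W) (β γ : ℝ),
        (∀ p ∈ Hset, pZ p.1 w + p.2 * β ≤ γ) ∧ γ < pZ z w + r * β := by
    rintro ⟨w, β, hsep⟩
    have hb0 : ((-b, (0:ℝ)) : Z × ℝ) ∈ Hset := by
      have := hmemH 0 h0P 0 h0Q 0 (by simp)
      simpa using this
    have hb := hsep _ hb0
    simp only [map_sub, map_neg, LinearMap.sub_apply, LinearMap.neg_apply] at hb
    -- hb : -(pZ b w) - pZ z w + (0 - r) * β < 0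
    refine ⟨w, β, -(pZ b w), ?_, by nlinarith⟩
    intro p hp
    rw [hH, Set.mem_setOf_eq] at hp
    obtain ⟨x, hx, q, hq, hp1, hp2⟩ := hp
    by_contra hC
    push_neg at hC
    set v : ℝ := pZ z w + r * β with hv
    have hvb : 0 < v + pZ b w + 1 := by nlinarith
    set C : ℝ := pZ p.1 w + p.2 * β + pZ b w with hCdef
    have hCpos : 0 < C := by nlinarith
    set s : ℝ := (v + pZ b w + 1) / C with hs
    have hspos : 0 < s := div_pos hvb hCpos
    have hsC : s * C = v + pZ b w + 1 := div_mul_cancel₀ _ (ne_of_gt hCpos)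
    have hmem : ((A (s • x) - b - s • q, s * p.2) : Z × ℝ) ∈ Hset := by
      apply hmemH _ (hsP s hspos.le x hx) _ (hsQ s hspos.le q hq)
      rw [map_smul, LinearMap.smul_apply, smul_eq_mul]
      exact mul_le_mul_of_nonneg_left hp2 hspos.le
    have hfin := hsep _ hmem
    simp only [map_sub, map_smul, LinearMap.sub_apply, LinearMap.smul_apply, smul_eq_mul] at hfin
    -- hfin : s * pZ (A x) w - pZ b w - s * pZ q w - pZ z w + (s * p.2 - r) * β < 0
    have hp1' : pZ p.1 w = pZ (A x) w - pZ b w - pZ q w := by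
      rw [hp1]; simp [map_sub, LinearMap.sub_apply]
    rw [hCdef, hp1'] at hsC
    nlinarith
  -- (iii) → (i)
  have i_of_iii :
      (∃ (w : W) (β : ℝ), ∀ p ∈ Hset, pZ (p.1 - z) w + (p.2 - r) * β < 0) →
      (z, r) ∉ Nset := by
    rintro ⟨w, β, hsep⟩ hmemN
    rw [hN, Set.mem_setOf_eq] at hmemN
    have key : ∀ t : ℝ, 0 ≤ t → ∀ x ∈ P, ∀ q ∈ Q,
        t * pZ (A x) w - pZ b w - t * pZ q w - pZ z w + (t * pX x c - r) * β < 0 := by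
      intro t ht x hx q hq
      have hmem : ((A (t • x) - b - t • q, t * pX x c) : Z × ℝ) ∈ Hset := by
        apply hmemH _ (hsP t ht x hx) _ (hsQ t ht q hq)
        rw [map_smul, LinearMap.smul_apply, smul_eq_mul]
      have := hsep _ hmem
      simpa only [map_sub, map_smul, LinearMap.sub_apply, LinearMap.smul_apply,
        smul_eq_mul] using this
    have hM : 0 < pZ b w + pZ z w + r * β := by
      have := key 0 le_rfl 0 h0P 0 h0Q
      simp only [map_zero, LinearMap.zero_apply, mul_zero, zero_mul, zero_sub] at this
      nlinarith
    have hbeta : β ≤ 0 := by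
      by_contra hβ
      push_neg at hβ
      set t : ℝ := (pZ b w + pZ z w + r * β + 1) / β with htdef
      have ht : 0 < t := div_pos (by linarith) hβ
      have hmem : ((-b, t) : Z × ℝ) ∈ Hset := by
        have := hmemH 0 h0P 0 h0Q t (by simpa using ht.le)
        simpa using this
      have h2 := hsep _ hmem
      simp only [map_sub, map_neg, LinearMap.sub_apply, LinearMap.neg_apply] at h2
      have hc : t * β = pZ b w + pZ z w + r * β + 1 := div_mul_cancel₀ _ (ne_of_gt hβ)
      nlinarith
    have hQw : ∀ q ∈ Q, 0 ≤ pZ q w := by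
      intro q hq
      by_contra hqw
      push_neg at hqw
      set t : ℝ := (pZ b w + pZ z w + r * β + 1) / (-pZ q w) with htdef
      have ht : 0 < t := div_pos (by linarith) (by linarith)
      have h2 := key t ht.le 0 h0P q hq
      simp only [map_zero, LinearMap.zero_apply, mul_zero, zero_mul] at h2
      have hc : t * (-pZ q w) = pZ b w + pZ z w + r * β + 1 :=
        div_mul_cancel₀ _ (by linarith)
      nlinarith
    have hPw : ∀ x ∈ P, pZ (A x) w + pX x c * β ≤ 0 := by
      intro x hx
      by_contra hD
      push_neg at hD
      set t : ℝ := (pZ b w + pZ z w + r * β + 1) / (pZ (A x) w + pX x c * β) with htdef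
      have ht : 0 < t := div_pos (by linarith) hD
      have h2 := key t ht.le x hx 0 h0Q
      simp only [map_zero, LinearMap.zero_apply, mul_zero] at h2
      have hc : t * (pZ (A x) w + pX x c * β) = pZ b w + pZ z w + r * β + 1 :=
        div_mul_cancel₀ _ (ne_of_gt hD)
      nlinarith
    rcases lt_or_eq_of_le hbeta with hβneg | hβ0
    · -- case β < 0 : w* = (-β)⁻¹ • w
      set μ : ℝ := (-β)⁻¹ with hμdef
      have hμ : 0 < μ := by rw [hμdef]; rw [inv_pos]; linarith
      have hμβ : μ * (-β) = 1 := inv_mul_cancel₀ (by linarith)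
      have hwFD : μ • w ∈ FD := by
        rw [hFD]
        constructor
        · rw [hQstar]
          intro q hq
          rw [map_smul, smul_eq_mul]
          exact mul_nonneg hμ.le (hQw q hq)
        · rw [hPstar]
          intro x hx
          simp only [map_sub, map_smul, smul_eq_mul, hadj]
          have h1 := hPw x hx
          have h2 : μ * (pX x c * β) = -(pX x c) := by linear_combination (-(pX x c)) * hμβ
          nlinarith [mul_nonneg hμ.le (neg_nonneg.2 h1)]
      have h3 := hmemN _ hwFD
      simp only [map_add, LinearMap.add_apply, map_smul, smul_eq_mul] at h3
      have h4 : μ * (r * β) = -r := by linear_combination (-r) * hμβ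
      nlinarith [mul_pos hμ hM]
    · -- case β = 0
      subst hβ0
      simp only [mul_zero, add_zero] at hM hPw
      obtain ⟨w0, hw0FD⟩ := hFDne
      have hw0 := hw0FD
      rw [hFD] at hw0
      obtain ⟨hw0Q, hw0P⟩ := hw0
      rw [hQstar] at hw0Q
      rw [hPstar] at hw0P
      set g : ℝ := pZ b w + pZ z w with hgdef
      set a : ℝ := pZ b w0 + pZ z w0 with hadef
      set t : ℝ := max 0 ((r - a) / g + 1) with htdef
      have ht0 : 0 ≤ t := le_max_left _ _
      have ht1 : (r - a) / g + 1 ≤ t := le_max_right _ _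
      have htg : r - a < t * g := by
        have h1 : ((r - a) / g + 1) * g = r - a + g := by
          field_simp
        nlinarith
      have hwFD : w0 + t • w ∈ FD := by
        rw [hFD]
        constructor
        · rw [hQstar]
          intro q hq
          rw [map_add, map_smul, smul_eq_mul]
          exact add_nonneg (hw0Q q hq) (mul_nonneg ht0 (hQw q hq))
        · rw [hPstar]
          intro x hx
          have h1 := hw0P x hx
          have h2 := hPw x hx
          rw [map_sub, hadj] at h1
          simp only [map_sub, map_add, map_smul, smul_eq_mul, hadj]
          nlinarith [mul_nonneg ht0 (neg_nonneg.2 h2)]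
      have h3 := hmemN _ hwFD
      simp only [map_add, LinearMap.add_apply, map_smul, smul_eq_mul] at h3
      nlinarith
  exact ⟨⟨ii_of_i, fun h => i_of_iii (iii_of_ii h)⟩, ⟨iii_of_ii, ii_of_iii⟩⟩
end

section
/- The algebraic closure of H is contained in N: acl H ⊆ N. -/
open Set Filter

theorem acl_H_subset_N
    {X Y Z W : Type*} [AddCommGroup X] [Module ℝ X] [AddCommGroup Y] [Module ℝ Y]
    [AddCommGroup Z] [Module ℝ Z] [AddCommGroup W] [Module ℝ W]
    (pX : X →ₗ[ℝ] Y →ₗ[ℝ] ℝ) (pZ : Z →ₗ[ℝ] W →ₗ[ℝ] ℝ)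
    (A : X →ₗ[ℝ] Z) (Astar : W →ₗ[ℝ] Y)
    (hadj : ∀ (x : X) (w : W), pX x (Astar w) = pZ (A x) w)
    (P : Set X) (Q : Set Z)
    (hPne : P.Nonempty)
    (hPcone : ∀ s t : ℝ, 0 ≤ s → 0 ≤ t → ∀ u ∈ P, ∀ v ∈ P, s • u + t • v ∈ P)
    (hQne : Q.Nonempty)
    (hQcone : ∀ s t : ℝ, 0 ≤ s → 0 ≤ t → ∀ u ∈ Q, ∀ v ∈ Q, s • u + t • v ∈ Q)
    (b : Z) (c : Y)
    (Pstar : Set Y) (hPstar : Pstar = {y : Y | ∀ x ∈ P, 0 ≤ pX x y})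
    (Qstar : Set W) (hQstar : Qstar = {w : W | ∀ z ∈ Q, 0 ≤ pZ z w})
    (FP : Set X) (hFP : FP = {x ∈ P | A x - b ∈ Q})
    (FD : Set W) (hFD : FD = {w ∈ Qstar | c - Astar w ∈ Pstar})
    (Hset : Set (Z × ℝ))
    (hH : Hset = {p : Z × ℝ | ∃ x ∈ P, ∃ q ∈ Q, p.1 = A x - b - q ∧ pX x c ≤ p.2})
    (Nset : Set (Z × ℝ))
    (hN : Nset = {p : Z × ℝ | ∀ w ∈ FD, pZ (b + p.1) w ≤ p.2})
    :
    Hset ∪ {p : Z × ℝ | ∃ q ∈ Hset, q ≠ p ∧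
      ∀ l : ℝ, 0 ≤ l → l < 1 → (1 - l) • q + l • p ∈ Hset} ⊆ Nset := by
  -- First, H ⊆ N
  have key : Hset ⊆ Nset := by
    intro p hp
    rw [hH] at hp
    rw [hN]
    obtain ⟨x, hx, q, hq, h1, h2⟩ := hp
    intro w hw
    rw [hFD, hQstar, hPstar] at hw
    obtain ⟨hwQ, hwP⟩ := hw
    have hq' : 0 ≤ pZ q w := hwQ q hq
    have hc' : 0 ≤ pX x (c - Astar w) := hwP x hx
    have hAx : pX x (Astar w) = pZ (A x) w := hadj x w
    have : pX x (Astar w) ≤ pX x c := by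
      have := hc'
      simp [map_sub] at this
      linarith
    rw [h1]
    simp only [map_add, map_sub, LinearMap.sub_apply, LinearMap.add_apply]
    linarith
  intro p hp
  rcases hp with hp | hp
  · exact key hp
  · obtain ⟨pb, hpb, _, hseg⟩ := hp
    rw [hN]
    intro w hw
    have hNb := key hpb
    rw [hN] at hNb
    have ha : pZ (b + pb.1) w ≤ pb.2 := hNb w hw
    by_contra hcon
    push_neg at hcon
    set a : ℝ := pZ (b + pb.1) w - pb.2 with hadef
    set cv : ℝ := pZ (b + p.1) w - p.2 with hcdef
    have ha0 : a ≤ 0 := by rw [hadef]; linarith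
    have hc0 : 0 < cv := by rw [hcdef]; linarith
    set l : ℝ := (cv / 2 - a) / (cv - a) with hldef
    have hca : 0 < cv - a := by linarith
    have hl0 : 0 ≤ l := by
      apply div_nonneg <;> linarith
    have hl1 : l < 1 := by
      rw [hldef, div_lt_one hca]; linarith
    have hsegmem := key (hseg l hl0 hl1)
    rw [hN] at hsegmem
    have hle := hsegmem w hw
    simp only [Prod.fst_add, Prod.smul_fst, Prod.snd_add, Prod.smul_snd, smul_eq_mul,
      map_add, map_smul, LinearMap.add_apply, LinearMap.smul_apply, smul_eq_mul] at hle
    -- hle : pZ (b + ((1-l)•pb.1 + l•p.1)) w ≤ (1-l)*pb.2 + l*p.2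
    have hexp : (1 - l) * a + l * cv ≤ 0 := by
      have : pZ b w + ((1 - l) * pZ pb.1 w + l * pZ p.1 w) ≤ (1 - l) * pb.2 + l * p.2 := by
        convert hle using 2
      have hb1 : pZ (b + pb.1) w = pZ b w + pZ pb.1 w := by simp [map_add]
      have hb2 : pZ (b + p.1) w = pZ b w + pZ p.1 w := by simp [map_add]
      rw [hadef, hcdef, hb1, hb2]
      ring_nf
      ring_nf at this
      linarith
    have hval : (1 - l) * a + l * cv = cv / 2 := by
      rw [hldef]
      field_simp
      ring
    rw [hval] at hexp
    linarith
end

section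
/- Perturbed strong duality 1: fix z ∈ Z and assume F(D) ≠ ∅. The following are equivalent: (i) H ∩ ({z} × ℝ) is nonempty and H ∩ ({z} × ℝ) = N ∩ ({z} × ℝ); (ii) there exists x̄ ∈ P with Ax̄ − b − z ∈ Q such that ⟨x̄, c⟩ ≤ ⟨x, c⟩ for every x ∈ P with Ax − b − z ∈ Q, and ⟨x̄, c⟩ = sup{⟨b + z, w⟩ : w ∈ F(D)} (a finite real supremum); that is, min{⟨x, c⟩ : x ∈ P, Ax − b − z ∈ Q} is attained and equals sup{⟨b + z, w⟩ : w ∈ Q*, −A*w + c ∈ P*}. -/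
open Set Filter

theorem perturbed_strong_duality_one
    {X Y Z W : Type*} [AddCommGroup X] [Module ℝ X] [AddCommGroup Y] [Module ℝ Y]
    [AddCommGroup Z] [Module ℝ Z] [AddCommGroup W] [Module ℝ W]
    (pX : X →ₗ[ℝ] Y →ₗ[ℝ] ℝ) (pZ : Z →ₗ[ℝ] W →ₗ[ℝ] ℝ)
    (A : X →ₗ[ℝ] Z) (Astar : W →ₗ[ℝ] Y)
    (hadj : ∀ (x : X) (w : W), pX x (Astar w) = pZ (A x) w)
    (P : Set X) (Q : Set Z)
    (hPne : P.Nonempty)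
    (hPcone : ∀ s t : ℝ, 0 ≤ s → 0 ≤ t → ∀ u ∈ P, ∀ v ∈ P, s • u + t • v ∈ P)
    (hQne : Q.Nonempty)
    (hQcone : ∀ s t : ℝ, 0 ≤ s → 0 ≤ t → ∀ u ∈ Q, ∀ v ∈ Q, s • u + t • v ∈ Q)
    (b : Z) (c : Y)
    (Pstar : Set Y) (hPstar : Pstar = {y : Y | ∀ x ∈ P, 0 ≤ pX x y})
    (Qstar : Set W) (hQstar : Qstar = {w : W | ∀ z ∈ Q, 0 ≤ pZ z w})
    (FP : Set X) (hFP : FP = {x ∈ P | A x - b ∈ Q})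
    (FD : Set W) (hFD : FD = {w ∈ Qstar | c - Astar w ∈ Pstar})
    (Hset : Set (Z × ℝ))
    (hH : Hset = {p : Z × ℝ | ∃ x ∈ P, ∃ q ∈ Q, p.1 = A x - b - q ∧ pX x c ≤ p.2})
    (Nset : Set (Z × ℝ))
    (hN : Nset = {p : Z × ℝ | ∀ w ∈ FD, pZ (b + p.1) w ≤ p.2})
    (z : Z) (hFDne : FD.Nonempty) :
    ((Hset ∩ ({z} ×ˢ (univ : Set ℝ))).Nonempty ∧
      Hset ∩ ({z} ×ˢ (univ : Set ℝ)) = Nset ∩ ({z} ×ˢ (univ : Set ℝ))) ↔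
    ∃ xbar ∈ P, A xbar - b - z ∈ Q ∧
      (∀ x ∈ P, A x - b - z ∈ Q → pX xbar c ≤ pX x c) ∧
      IsLUB {r : ℝ | ∃ w ∈ FD, r = pZ (b + z) w} (pX xbar c) := by
  set D : Set ℝ := {r : ℝ | ∃ w ∈ FD, r = pZ (b + z) w} with hD
  -- weak duality
  have hwd : ∀ x ∈ P, ∀ q ∈ Q, A x - b - q = z → ∀ w ∈ FD, pZ (b + z) w ≤ pX x c := by
    intro x hx q hq hzeq w hw
    rw [hFD] at hw
    obtain ⟨hwQ, hwP⟩ := hw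
    rw [hQstar] at hwQ
    rw [hPstar] at hwP
    have h1 : 0 ≤ pZ q w := hwQ q hq
    have h2 : 0 ≤ pX x (c - Astar w) := hwP x hx
    have h3 : pX x (c - Astar w) = pX x c - pZ (A x) w := by
      rw [map_sub, hadj]
    have h4 : pZ (b + z) w = pZ (A x) w - pZ q w := by
      rw [← hzeq]
      have : b + (A x - b - q) = A x - q := by abel
      rw [this, map_sub, LinearMap.sub_apply]
    linarith [h3 ▸ h2]
  constructor
  · rintro ⟨⟨p₁, hp₁H, hp₁s⟩, heq⟩
    rw [mem_prod, mem_singleton_iff] at hp₁s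
    rw [hH] at hp₁H
    obtain ⟨x₁, hx₁P, q₁, hq₁Q, hx₁eq, hx₁le⟩ := hp₁H
    rw [hp₁s.1] at hx₁eq
    have hfeas₁ : A x₁ - b - q₁ = z := hx₁eq.symm
    -- D is nonempty and bounded above
    have hDne : D.Nonempty := by
      obtain ⟨w₀, hw₀⟩ := hFDne
      exact ⟨pZ (b + z) w₀, w₀, hw₀, rfl⟩
    have hDbdd : BddAbove D := by
      refine ⟨pX x₁ c, ?_⟩
      rintro r ⟨w, hw, rfl⟩
      exact hwd x₁ hx₁P q₁ hq₁Q hfeas₁ w hw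
    have hlub : IsLUB D (sSup D) := isLUB_csSup hDne hDbdd
    -- (z, sSup D) ∈ N ∩ slice = H ∩ slice
    have hmemN : (z, sSup D) ∈ Nset ∩ ({z} ×ˢ (univ : Set ℝ)) := by
      constructor
      · rw [hN]
        intro w hw
        exact hlub.1 ⟨w, hw, rfl⟩
      · exact ⟨rfl, trivial⟩
    rw [← heq] at hmemN
    obtain ⟨hmemH, -⟩ := hmemN
    rw [hH] at hmemH
    obtain ⟨xbar, hxbarP, q, hqQ, hzq, hxbarle⟩ := hmemH
    simp only at hzq hxbarle
    have hfeq : A xbar - b - q = z := hzq.symm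
    have hqeq : A xbar - b - z = q := by rw [← hfeq]; abel
    have hub : pX xbar c ∈ upperBounds D := by
      rintro r ⟨w, hw, rfl⟩
      exact hwd xbar hxbarP q hqQ hfeq w hw
    have hxbar_eq : pX xbar c = sSup D := le_antisymm hxbarle (hlub.2 hub)
    refine ⟨xbar, hxbarP, hqeq ▸ hqQ, ?_, ?_⟩
    · intro x hx hxq
      have hfx : A x - b - (A x - b - z) = z := by abel
      have : pX x c ∈ upperBounds D := by
        rintro r ⟨w, hw, rfl⟩
        exact hwd x hx _ hxq hfx w hw
      calc pX xbar c = sSup D := hxbar_eq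
        _ ≤ pX x c := hlub.2 this
    · rw [hxbar_eq]; exact hlub
  · rintro ⟨xbar, hxbarP, hxbarQ, hmin, hlub⟩
    have hfeq : A xbar - b - (A xbar - b - z) = z := by abel
    have hxbarH : (z, pX xbar c) ∈ Hset := by
      rw [hH]
      exact ⟨xbar, hxbarP, A xbar - b - z, hxbarQ, hfeq.symm, le_refl _⟩
    constructor
    · exact ⟨(z, pX xbar c), hxbarH, ⟨rfl, trivial⟩⟩
    · ext p
      simp only [mem_inter_iff, mem_prod, mem_singleton_iff, mem_univ, and_true]
      constructor
      · rintro ⟨hpH, hpz⟩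
        refine ⟨?_, hpz⟩
        rw [hH] at hpH
        obtain ⟨x, hxP, q, hqQ, hpeq, hle⟩ := hpH
        rw [hpz] at hpeq
        rw [hN]
        intro w hw
        rw [hpz]
        exact le_trans (hwd x hxP q hqQ hpeq.symm w hw) hle
      · rintro ⟨hpN, hpz⟩
        refine ⟨?_, hpz⟩
        rw [hN] at hpN
        have hub : p.2 ∈ upperBounds D := by
          rintro r ⟨w, hw, rfl⟩
          rw [← hpz]
          exact hpN w hw
        have : pX xbar c ≤ p.2 := hlub.2 hub
        rw [hH]
        exact ⟨xbar, hxbarP, A xbar - b - z, hxbarQ, by rw [hpz]; exact hfeq.symm, this⟩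
end

section
/- Perturbed strong duality 2: fix y ∈ Y and assume F(P) ≠ ∅. The following are equivalent: (i) K ∩ ({y} × ℝ) is nonempty and K ∩ ({y} × ℝ) = M ∩ ({y} × ℝ); (ii) there exists w̄ ∈ Q* with −A*w̄ + c − y ∈ P* such that ⟨b, w̄⟩ ≥ ⟨b, w⟩ for every w ∈ Q* with −A*w + c − y ∈ P*, and ⟨b, w̄⟩ = inf{⟨x, c − y⟩ : x ∈ F(P)} (a finite real infimum); that is, max{⟨b, w⟩ : w ∈ Q*, −A*w + c − y ∈ P*} is attained and equals inf{⟨x, c − y⟩ : x ∈ P, Ax − b ∈ Q}. -/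
open Set Filter

theorem perturbed_strong_duality_two
    {X Y Z W : Type*} [AddCommGroup X] [Module ℝ X] [AddCommGroup Y] [Module ℝ Y]
    [AddCommGroup Z] [Module ℝ Z] [AddCommGroup W] [Module ℝ W]
    (pX : X →ₗ[ℝ] Y →ₗ[ℝ] ℝ) (pZ : Z →ₗ[ℝ] W →ₗ[ℝ] ℝ)
    (A : X →ₗ[ℝ] Z) (Astar : W →ₗ[ℝ] Y)
    (hadj : ∀ (x : X) (w : W), pX x (Astar w) = pZ (A x) w)
    (P : Set X) (Q : Set Z)
    (hPne : P.Nonempty)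
    (hPcone : ∀ s t : ℝ, 0 ≤ s → 0 ≤ t → ∀ u ∈ P, ∀ v ∈ P, s • u + t • v ∈ P)
    (hQne : Q.Nonempty)
    (hQcone : ∀ s t : ℝ, 0 ≤ s → 0 ≤ t → ∀ u ∈ Q, ∀ v ∈ Q, s • u + t • v ∈ Q)
    (b : Z) (c : Y)
    (Pstar : Set Y) (hPstar : Pstar = {y : Y | ∀ x ∈ P, 0 ≤ pX x y})
    (Qstar : Set W) (hQstar : Qstar = {w : W | ∀ z ∈ Q, 0 ≤ pZ z w})
    (FP : Set X) (hFP : FP = {x ∈ P | A x - b ∈ Q})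
    (FD : Set W) (hFD : FD = {w ∈ Qstar | c - Astar w ∈ Pstar})
    (Kset : Set (Y × ℝ))
    (hK : Kset = {p : Y × ℝ | ∃ w ∈ Qstar, ∃ y ∈ Pstar, p.1 = c - Astar w - y ∧ p.2 ≤ pZ b w})
    (Mset : Set (Y × ℝ))
    (hM : Mset = {p : Y × ℝ | ∀ x ∈ FP, p.2 ≤ pX x (c - p.1)})
    (y : Y) (hFPne : FP.Nonempty) :
    ((Kset ∩ ({y} ×ˢ (univ : Set ℝ))).Nonempty ∧
      Kset ∩ ({y} ×ˢ (univ : Set ℝ)) = Mset ∩ ({y} ×ˢ (univ : Set ℝ))) ↔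
    ∃ wbar ∈ Qstar, c - y - Astar wbar ∈ Pstar ∧
      (∀ w ∈ Qstar, c - y - Astar w ∈ Pstar → pZ b w ≤ pZ b wbar) ∧
      IsGLB {r : ℝ | ∃ x ∈ FP, r = pX x (c - y)} (pZ b wbar) := by
  -- weak duality
  have weak : ∀ w ∈ Qstar, c - y - Astar w ∈ Pstar → ∀ x ∈ FP,
      pZ b w ≤ pX x (c - y) := by
    intro w hw hfeas x hx
    rw [hFP] at hx
    obtain ⟨hxP, hxQ⟩ := hx
    rw [hPstar] at hfeas
    have h1 : 0 ≤ pX x (c - y - Astar w) := hfeas x hxP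
    rw [hQstar] at hw
    have h2 : 0 ≤ pZ (A x - b) w := hw _ hxQ
    have e1 : pX x (c - y - Astar w) = pX x (c - y) - pX x (Astar w) := by
      simp [map_sub]
    have e2 : pZ (A x - b) w = pX x (Astar w) - pZ b w := by
      simp [map_sub, hadj]
    linarith [h1, h2, e1 ▸ h1, e2 ▸ h2]
  set S : Set ℝ := {r : ℝ | ∃ x ∈ FP, r = pX x (c - y)} with hS
  have hSne : S.Nonempty := by
    obtain ⟨x, hx⟩ := hFPne
    exact ⟨pX x (c - y), x, hx, rfl⟩
  -- membership in K ∩ ({y} ×ˢ univ)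
  have memK : ∀ r : ℝ, ((y, r) ∈ Kset ∩ ({y} ×ˢ (univ : Set ℝ))) ↔
      ∃ w ∈ Qstar, c - y - Astar w ∈ Pstar ∧ r ≤ pZ b w := by
    intro r
    constructor
    · rintro ⟨hK', -⟩
      rw [hK] at hK'
      obtain ⟨w, hw, y', hy', h1, h2⟩ := hK'
      refine ⟨w, hw, ?_, h2⟩
      have : c - y - Astar w = y' := by
        simp only at h1
        rw [h1]; abel
      rwa [this]
    · rintro ⟨w, hw, hfeas, hr⟩
      refine ⟨?_, by simp⟩
      rw [hK]
      exact ⟨w, hw, c - y - Astar w, hfeas, by simp, hr⟩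
  have memM : ∀ r : ℝ, ((y, r) ∈ Mset ∩ ({y} ×ˢ (univ : Set ℝ))) ↔
      r ∈ lowerBounds S := by
    intro r
    constructor
    · rintro ⟨hM', -⟩
      rw [hM] at hM'
      rintro s ⟨x, hx, rfl⟩
      exact hM' x hx
    · intro hr
      refine ⟨?_, by simp⟩
      rw [hM]
      intro x hx
      exact hr ⟨x, hx, rfl⟩
  constructor
  · rintro ⟨⟨⟨p1, p2⟩, hpK⟩, heq⟩
    -- get one dual feasible point
    have hp1 : p1 = y := by
      have := hpK.2
      rw [Set.mem_prod] at this
      simpa using this.1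
    subst hp1
    obtain ⟨w₀, hw₀, hfeas₀, -⟩ := (memK p2).1 hpK
    have hbdd : BddBelow S := ⟨pZ b w₀, by rintro s ⟨x, hx, rfl⟩; exact weak w₀ hw₀ hfeas₀ x hx⟩
    set m := sInf S with hm
    have hmM : (p1, m) ∈ Mset ∩ ({p1} ×ˢ (univ : Set ℝ)) :=
      (memM m).2 fun s hs => csInf_le hbdd hs
    rw [← heq] at hmM
    obtain ⟨wbar, hwbar, hfeasbar, hmle⟩ := (memK m).1 hmM
    have hle : pZ b wbar ≤ m :=
      le_csInf hSne (by rintro s ⟨x, hx, rfl⟩; exact weak wbar hwbar hfeasbar x hx)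
    have hmeq : pZ b wbar = m := le_antisymm hle hmle
    refine ⟨wbar, hwbar, hfeasbar, ?_, ?_⟩
    · intro w hw hfeas
      have : pZ b w ≤ m :=
        le_csInf hSne (by rintro s ⟨x, hx, rfl⟩; exact weak w hw hfeas x hx)
      linarith
    · rw [hmeq]; exact isGLB_csInf hSne hbdd
  · rintro ⟨wbar, hwbar, hfeasbar, hmax, hglb⟩
    constructor
    · exact ⟨(y, pZ b wbar), (memK (pZ b wbar)).2 ⟨wbar, hwbar, hfeasbar, le_refl _⟩⟩
    · ext p
      obtain ⟨p1, p2⟩ := p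
      constructor
      · intro hp
        have hp1 : p1 = y := by
          have := hp.2
          rw [Set.mem_prod] at this
          simpa using this.1
        subst hp1
        obtain ⟨w, hw, hfeas, hr⟩ := (memK p2).1 hp
        refine (memM p2).2 ?_
        rintro s ⟨x, hx, rfl⟩
        calc p2 ≤ pZ b w := hr
          _ ≤ pZ b wbar := hmax w hw hfeas
          _ ≤ pX x (c - p1) := hglb.1 ⟨x, hx, rfl⟩
      · intro hp
        have hp1 : p1 = y := by
          have := hp.2
          rw [Set.mem_prod] at this
          simpa using this.1
        subst hp1
        have hlb : p2 ∈ lowerBounds S := (memM p2).1 hp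
        exact (memK p2).2 ⟨wbar, hwbar, hfeasbar, hglb.2 hlb⟩
end

section
/- Fix z ∈ Z and assume F(D) ≠ ∅ and that the set {⟨b + z, w⟩ : w ∈ F(D)} is bounded above; write v_D(z) := sup{⟨b + z, w⟩ : w ∈ F(D)}. Then: (i) K_z is a nonempty convex subset of X* × ℝ, and there exists w̄ ∈ F(D) such that (−core P*) × (−∞, ⟨b + z, w̄⟩) ⊆ core K_z; (ii) (0_{X*}, v_D(z)) ∉ core K_z; (iii) for every ε > 0, (0_{X*}, v_D(z) − ε) ∈ K_z; (iv) if there exists w̄ ∈ Q* with −A*w̄ + c ∈ core P*, then for every y ∈ X* there exists δ₀ > 0 such that (δ·y, ⟨b + z, w̄⟩) ∈ K_z whenever |δ| ≤ δ₀. -/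
open Set Filter

/-- The algebraic core of a set in a real vector space. -/
def algebraicCore {V : Type*} [AddCommGroup V] [Module ℝ V] (S : Set V) : Set V :=
  {v | ∀ u : V, ∃ t₀ > (0 : ℝ), ∀ t : ℝ, 0 ≤ t → t ≤ t₀ → v + t • u ∈ S}

theorem properties_Kz
    {X Z : Type*} [AddCommGroup X] [Module ℝ X] [AddCommGroup Z] [Module ℝ Z]
    (A : X →ₗ[ℝ] Z)
    (P : Set X) (Q : Set Z)
    (hPne : P.Nonempty)
    (hPcone : ∀ s t : ℝ, 0 ≤ s → 0 ≤ t → ∀ u ∈ P, ∀ v ∈ P, s • u + t • v ∈ P)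
    (hQne : Q.Nonempty)
    (hQcone : ∀ s t : ℝ, 0 ≤ s → 0 ≤ t → ∀ u ∈ Q, ∀ v ∈ Q, s • u + t • v ∈ Q)
    (b : Z) (c : Module.Dual ℝ X)
    (Pstar : Set (Module.Dual ℝ X)) (hPstar : Pstar = {y | ∀ x ∈ P, 0 ≤ y x})
    (Qstar : Set (Module.Dual ℝ Z)) (hQstar : Qstar = {w | ∀ z ∈ Q, 0 ≤ w z})
    (FP : Set X) (hFP : FP = {x ∈ P | A x - b ∈ Q})
    (FD : Set (Module.Dual ℝ Z)) (hFD : FD = {w ∈ Qstar | c - A.dualMap w ∈ Pstar})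
    (z : Z) (hFDne : FD.Nonempty)
    (vD : ℝ) (hvD : IsLUB {r : ℝ | ∃ w ∈ FD, r = w (b + z)} vD)
    (Kz : Set (Module.Dual ℝ X × ℝ))
    (hKz : Kz = {p | ∃ w ∈ Qstar, ∃ y ∈ Pstar,
      p.1 = c - A.dualMap w - y ∧ p.2 ≤ w (b + z)}) :
    (Kz.Nonempty ∧ Convex ℝ Kz ∧
      ∃ wbar ∈ FD, (-(algebraicCore Pstar)) ×ˢ Iio (wbar (b + z)) ⊆ algebraicCore Kz) ∧
    ((0 : Module.Dual ℝ X), vD) ∉ algebraicCore Kz ∧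
    (∀ ε > (0 : ℝ), ((0 : Module.Dual ℝ X), vD - ε) ∈ Kz) ∧
    (∀ wbar ∈ Qstar, c - A.dualMap wbar ∈ algebraicCore Pstar →
      ∀ y : Module.Dual ℝ X, ∃ δ₀ > (0 : ℝ), ∀ δ : ℝ, |δ| ≤ δ₀ →
        (δ • y, wbar (b + z)) ∈ Kz) := by
  -- basic facts about Pstar
  have hPadd : ∀ y₁ ∈ Pstar, ∀ y₂ ∈ Pstar, y₁ + y₂ ∈ Pstar := by
    intro y₁ h₁ y₂ h₂
    rw [hPstar] at *
    intro x hx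
    have := h₁ x hx
    have := h₂ x hx
    simp only [LinearMap.add_apply]
    linarith
  obtain ⟨w₀, hw₀⟩ := hFDne
  have hw₀Q : w₀ ∈ Qstar := by rw [hFD] at hw₀; exact hw₀.1
  have hw₀P : c - A.dualMap w₀ ∈ Pstar := by rw [hFD] at hw₀; exact hw₀.2
  refine ⟨⟨⟨(0, w₀ (b + z)), ?_⟩, ?_, ?_⟩, ?_, ?_, ?_⟩
  · -- nonempty
    rw [hKz]
    exact ⟨w₀, hw₀Q, c - A.dualMap w₀, hw₀P, by simp, le_refl _⟩
  · -- convex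
    intro p hp q hq a b' ha hb' hab
    rw [hKz] at hp hq ⊢
    obtain ⟨w₁, hw₁, y₁, hy₁, h₁1, h₁2⟩ := hp
    obtain ⟨w₂, hw₂, y₂, hy₂, h₂1, h₂2⟩ := hq
    refine ⟨a • w₁ + b' • w₂, ?_, a • y₁ + b' • y₂, ?_, ?_, ?_⟩
    · rw [hQstar] at hw₁ hw₂ ⊢
      intro zz hzz
      have := hw₁ zz hzz
      have := hw₂ zz hzz
      simp only [LinearMap.add_apply, LinearMap.smul_apply, smul_eq_mul]
      nlinarith
    · rw [hPstar] at hy₁ hy₂ ⊢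
      intro x hx
      have := hy₁ x hx
      have := hy₂ x hx
      simp only [LinearMap.add_apply, LinearMap.smul_apply, smul_eq_mul]
      nlinarith
    · have : (a • p + b' • q).1 = a • p.1 + b' • q.1 := rfl
      rw [this, h₁1, h₂1]
      have hb'' : b' = 1 - a := by linarith
      subst hb''
      simp only [map_add, map_smul]
      module
    · have : (a • p + b' • q).2 = a * p.2 + b' * q.2 := rfl
      rw [this]
      simp only [LinearMap.add_apply, LinearMap.smul_apply, smul_eq_mul]
      nlinarith
  · -- core inclusion
    refine ⟨w₀, hw₀, ?_⟩
    rintro ⟨ny₀, r⟩ ⟨hny₀, hr⟩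
    simp only [Set.mem_neg] at hny₀
    simp only [Set.mem_Iio] at hr
    intro u
    obtain ⟨t₁, ht₁, ht₁'⟩ := hny₀ (-u.1)
    refine ⟨min t₁ ((w₀ (b + z) - r) / (|u.2| + 1)), ?_, ?_⟩
    · apply lt_min ht₁
      apply div_pos (by linarith) (by positivity)
    · intro t ht0 htle
      rw [hKz]
      refine ⟨w₀, hw₀Q, (c - A.dualMap w₀) + (-ny₀ + t • (-u.1)), ?_, ?_, ?_⟩
      · exact hPadd _ hw₀P _ (ht₁' t ht0 (le_trans htle (min_le_left _ _)))
      · show ny₀ + t • u.1 = _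
        module
      · show r + t * u.2 ≤ w₀ (b + z)
        have h1 : t ≤ (w₀ (b + z) - r) / (|u.2| + 1) := le_trans htle (min_le_right _ _)
        have h2 : t * (|u.2| + 1) ≤ w₀ (b + z) - r := by
          calc t * (|u.2| + 1) ≤ ((w₀ (b + z) - r) / (|u.2| + 1)) * (|u.2| + 1) := by
                apply mul_le_mul_of_nonneg_right h1 (by positivity)
            _ = w₀ (b + z) - r := by field_simp
        have h3 : t * u.2 ≤ t * (|u.2| + 1) := by
          apply mul_le_mul_of_nonneg_left _ ht0
          have := le_abs_self u.2
          linarith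
        linarith
  · -- (0, vD) ∉ core Kz
    intro hcore
    obtain ⟨t₀, ht₀, ht⟩ := hcore (0, 1)
    have hmem := ht t₀ (le_of_lt ht₀) (le_refl _)
    rw [hKz] at hmem
    obtain ⟨w, hwQ, y, hyP, h1, h2⟩ := hmem
    have h1' : (0 : Module.Dual ℝ X) = c - A.dualMap w - y := by
      have : ((0, vD) + t₀ • ((0 : Module.Dual ℝ X), (1:ℝ))).1 = (0 : Module.Dual ℝ X) := by
        simp
      rwa [this] at h1
    have hwFD : w ∈ FD := by
      rw [hFD]
      refine ⟨hwQ, ?_⟩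
      have : c - A.dualMap w = y := by
        have := h1'.symm
        linear_combination (norm := module) this
      rw [this]; exact hyP
    have h2' : vD + t₀ ≤ w (b + z) := by
      have : ((0, vD) + t₀ • ((0 : Module.Dual ℝ X), (1:ℝ))).2 = vD + t₀ := by
        simp
      rwa [this] at h2
    have : w (b + z) ≤ vD := hvD.1 ⟨w, hwFD, rfl⟩
    linarith
  · -- (0, vD - ε) ∈ Kz
    intro ε hε
    by_contra hcon
    have hub : ∀ r ∈ {r : ℝ | ∃ w ∈ FD, r = w (b + z)}, r ≤ vD - ε := by
      intro r hrmem
      obtain ⟨w, hwFD, rfl⟩ := hrmem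
      by_contra hlt
      push_neg at hlt
      apply hcon
      rw [hFD] at hwFD
      rw [hKz]
      exact ⟨w, hwFD.1, c - A.dualMap w, hwFD.2, by simp, le_of_lt hlt⟩
    have := hvD.2 hub
    linarith
  · -- (iv)
    intro wbar hwbarQ hcore y
    obtain ⟨t₁, ht₁, ht₁'⟩ := hcore (-y)
    obtain ⟨t₂, ht₂, ht₂'⟩ := hcore y
    refine ⟨min t₁ t₂, lt_min ht₁ ht₂, ?_⟩
    intro δ hδ
    rw [hKz]
    refine ⟨wbar, hwbarQ, c - A.dualMap wbar - δ • y, ?_, by module, le_refl _⟩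
    rcases le_or_gt 0 δ with hδ0 | hδ0
    · have : |δ| = δ := abs_of_nonneg hδ0
      rw [this] at hδ
      have := ht₁' δ hδ0 (le_trans hδ (min_le_left _ _))
      convert this using 1
      module
    · have : |δ| = -δ := abs_of_neg hδ0
      rw [this] at hδ
      have := ht₂' (-δ) (by linarith) (le_trans hδ (min_le_right _ _))
      convert this using 1
      module
end

section
/- Fix y ∈ Y and assume F(P) ≠ ∅ and that the set {⟨x, c − y⟩ : x ∈ F(P)} is bounded below; write v_P(y) := inf{⟨x, c − y⟩ : x ∈ F(P)}. Then: (i) H_y is a nonempty convex subset of Z × ℝ, and there exists x̄ ∈ F(P) such that (−Q) × [⟨x̄, c − y⟩, +∞) ⊆ H_y and (−core Q) × (⟨x̄, c − y⟩, +∞) ⊆ core H_y; (ii) (0_Z, v_P(y)) ∉ core H_y; (iii) for every ε > 0, (0_Z, v_P(y) + ε) ∈ H_y; (iv) if there exists x̄ ∈ P with Ax̄ − b ∈ core Q, then for every z ∈ Z there exists δ₀ > 0 such that (δ·z, ⟨x̄, c − y⟩) ∈ H_y whenever |δ| ≤ δ₀. -/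
open Set Filter

theorem properties_Hy
    {X Y Z W : Type*} [AddCommGroup X] [Module ℝ X] [AddCommGroup Y] [Module ℝ Y]
    [AddCommGroup Z] [Module ℝ Z] [AddCommGroup W] [Module ℝ W]
    (pX : X →ₗ[ℝ] Y →ₗ[ℝ] ℝ) (pZ : Z →ₗ[ℝ] W →ₗ[ℝ] ℝ)
    (A : X →ₗ[ℝ] Z) (Astar : W →ₗ[ℝ] Y)
    (hadj : ∀ (x : X) (w : W), pX x (Astar w) = pZ (A x) w)
    (P : Set X) (Q : Set Z)
    (hPne : P.Nonempty)
    (hPcone : ∀ s t : ℝ, 0 ≤ s → 0 ≤ t → ∀ u ∈ P, ∀ v ∈ P, s • u + t • v ∈ P)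
    (hQne : Q.Nonempty)
    (hQcone : ∀ s t : ℝ, 0 ≤ s → 0 ≤ t → ∀ u ∈ Q, ∀ v ∈ Q, s • u + t • v ∈ Q)
    (b : Z) (c : Y)
    (Pstar : Set Y) (hPstar : Pstar = {y : Y | ∀ x ∈ P, 0 ≤ pX x y})
    (Qstar : Set W) (hQstar : Qstar = {w : W | ∀ z ∈ Q, 0 ≤ pZ z w})
    (FP : Set X) (hFP : FP = {x ∈ P | A x - b ∈ Q})
    (FD : Set W) (hFD : FD = {w ∈ Qstar | c - Astar w ∈ Pstar})
    (yv : Y) (hFPne : FP.Nonempty)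
    (vP : ℝ) (hvP : IsGLB {r : ℝ | ∃ x ∈ FP, r = pX x (c - yv)} vP)
    (Hy : Set (Z × ℝ))
    (hHy : Hy = {p : Z × ℝ | ∃ x ∈ P, ∃ q ∈ Q, p.1 = A x - b - q ∧ pX x (c - yv) ≤ p.2}) :
    (Hy.Nonempty ∧ Convex ℝ Hy ∧
      ∃ xbar ∈ FP, (-Q) ×ˢ Ici (pX xbar (c - yv)) ⊆ Hy ∧
        (-(algebraicCore Q)) ×ˢ Ioi (pX xbar (c - yv)) ⊆ algebraicCore Hy) ∧
    ((0 : Z), vP) ∉ algebraicCore Hy ∧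
    (∀ ε > (0 : ℝ), ((0 : Z), vP + ε) ∈ Hy) ∧
    (∀ xbar ∈ P, A xbar - b ∈ algebraicCore Q →
      ∀ z : Z, ∃ δ₀ > (0 : ℝ), ∀ δ : ℝ, |δ| ≤ δ₀ →
        (δ • z, pX xbar (c - yv)) ∈ Hy) := by
  subst hHy
  obtain ⟨x0, hx0⟩ := hFPne
  have hx0' := hx0
  rw [hFP] at hx0'
  obtain ⟨hx0P, hx0Q⟩ := hx0'
  have hQadd : ∀ u ∈ Q, ∀ v ∈ Q, u + v ∈ Q := fun u hu v hv => by
    simpa using hQcone 1 1 zero_le_one zero_le_one u hu v hv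
  have hlb := hvP.1
  constructor
  · refine ⟨⟨((0 : Z), pX x0 (c - yv)), x0, hx0P, A x0 - b, hx0Q, by simp, le_rfl⟩, ?_, ?_⟩
    · -- convexity
      rintro p ⟨x, hxP, q, hq, h1, h2⟩ p' ⟨x', hx'P, q', hq', h1', h2'⟩ a a' ha ha' hab
      refine ⟨a • x + a' • x', hPcone a a' ha ha' x hxP x' hx'P,
        a • q + a' • q', hQcone a a' ha ha' q hq q' hq', ?_, ?_⟩
      · simp only [Prod.fst_add, Prod.smul_fst, h1, h1', map_add, map_smul]
        linear_combination (norm := module) (-1:ℝ) • hab • b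
      · simp only [Prod.snd_add, Prod.smul_snd, map_add, map_smul, LinearMap.add_apply,
          LinearMap.smul_apply, smul_eq_mul]
        have := mul_le_mul_of_nonneg_left h2 ha
        have := mul_le_mul_of_nonneg_left h2' ha'
        linarith
    · refine ⟨x0, hx0, ?_, ?_⟩
      · rintro ⟨qz, r⟩ ⟨hqz, hr⟩
        simp only [Set.mem_neg] at hqz
        exact ⟨x0, hx0P, (A x0 - b) + -qz, hQadd _ hx0Q _ hqz, by simp, hr⟩
      · rintro ⟨qz, r⟩ ⟨hqz, hr⟩
        simp only [Set.mem_neg] at hqz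
        simp only [mem_Ioi] at hr
        intro u
        obtain ⟨t₁, ht₁, hmem⟩ := hqz (-u.1)
        set v := pX x0 (c - yv) with hv
        refine ⟨min t₁ ((r - v) / (|u.2| + 1)), lt_min ht₁ (by have := sub_pos.mpr hr; positivity), fun t ht0 htle => ?_⟩
        have htt₁ : t ≤ t₁ := le_trans htle (min_le_left _ _)
        have htt₂ : t ≤ (r - v) / (|u.2| + 1) := le_trans htle (min_le_right _ _)
        have hq' : -qz + t • (-u.1) ∈ Q := hmem t ht0 htt₁
        refine ⟨x0, hx0P, (A x0 - b) + (-qz + t • (-u.1)), hQadd _ hx0Q _ hq', ?_, ?_⟩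
        · simp only [Prod.fst_add, Prod.smul_fst, smul_neg]
          abel
        · simp only [Prod.snd_add, Prod.smul_snd, smul_eq_mul]
          have h1 : t * (|u.2| + 1) ≤ r - v := by
            rw [← le_div_iff₀ (by positivity)]; exact htt₂
          have h2 : -|u.2| ≤ u.2 := neg_abs_le _
          nlinarith [abs_nonneg u.2]
  refine ⟨?_, ?_, ?_⟩
  · -- (0, vP) ∉ core Hy
    intro h
    obtain ⟨t₀, ht₀, hmem⟩ := h ((0 : Z), (-1 : ℝ))
    obtain ⟨x, hxP, q, hq, h1, h2⟩ := hmem t₀ ht₀.le le_rfl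
    simp only [Prod.fst_add, Prod.smul_fst, smul_zero, add_zero] at h1
    simp only [Prod.snd_add, Prod.smul_snd, smul_eq_mul, mul_neg_one] at h2
    have hxFP : x ∈ FP := by rw [hFP]; exact ⟨hxP, by rw [show A x - b = q from by linear_combination (norm := abel) -h1]; exact hq⟩
    have := hlb ⟨x, hxFP, rfl⟩
    linarith
  · -- (0, vP + ε) ∈ Hy
    intro ε hε
    have hnot : ¬ (vP + ε ∈ lowerBounds {r : ℝ | ∃ x ∈ FP, r = pX x (c - yv)}) := by
      intro hcon
      have := hvP.2 hcon
      linarith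
    simp only [lowerBounds, Set.mem_setOf_eq, not_forall] at hnot
    obtain ⟨r, hr, hrlt⟩ := hnot
    obtain ⟨x, hxFP, rfl⟩ := hr
    rw [hFP] at hxFP
    refine ⟨x, hxFP.1, A x - b, hxFP.2, by simp, (not_le.mp hrlt).le⟩
  · -- (iv)
    intro xbar hxbarP hcore z
    obtain ⟨t₁, ht₁, hmem₁⟩ := hcore (-z)
    obtain ⟨t₂, ht₂, hmem₂⟩ := hcore z
    refine ⟨min t₁ t₂, lt_min ht₁ ht₂, fun δ hδ => ?_⟩
    have hq : (A xbar - b) + -(δ • z) ∈ Q := by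
      rcases le_or_gt 0 δ with hδ0 | hδ0
      · have : δ ≤ t₁ := le_trans (le_trans (le_abs_self δ) hδ) (min_le_left _ _)
        simpa [smul_neg] using hmem₁ δ hδ0 this
      · have h1 : -δ ≤ t₂ := le_trans (le_trans (neg_le_abs δ) hδ) (min_le_right _ _)
        have : (A xbar - b) + (-δ) • z ∈ Q := hmem₂ (-δ) (by linarith) h1
        simpa [neg_smul] using this
    exact ⟨xbar, hxbarP, (A xbar - b) + -(δ • z), hq, by simp, le_rfl⟩
end

section
/- Assume there exists x̄ ∈ P with Ax̄ − b ∈ core Q. Then K = M. -/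
open Set Filter

/-!
Weak duality gives `K ⊆ M`. Conversely, for `(y, r) ∈ M` put `ℓ = c - y` and consider the convex
cone `C ⊆ Z × ℝ` of all `(A x - q - t • b, ℓ x - t * r)` with `x ∈ P`, `q ∈ Q`, `t ≥ 0`. Feasibility
of the Slater point `xbar` shows that `C` meets the axis `{0} × ℝ` only in `[0, ∞)`, and since
`A xbar - b ∈ core Q` the axis plus `C` is all of `Z × ℝ`. M. Riesz's extension theorem extends
`(0, α) ↦ α` to a functional `g ≥ 0` on `C`; writing `g (z, α) = α - w z` gives `w ∈ Q*` with
`c - y - A* w ∈ P*` and `r ≤ w b`.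
-/

open Topology

lemma algebraicCore_subset {V : Type*} [AddCommGroup V] [Module ℝ V] (S : Set V) :
    algebraicCore S ⊆ S := fun v hv => by
  obtain ⟨t₀, ht₀, h⟩ := hv 0
  simpa using h 0 le_rfl ht₀.le

namespace ConicDuality

variable {X Z : Type*} [AddCommGroup X] [Module ℝ X] [AddCommGroup Z] [Module ℝ Z]
  (P : PointedCone ℝ X) (Q : PointedCone ℝ Z) (A : X →ₗ[ℝ] Z) (b : Z) (ℓ : Module.Dual ℝ X) (r : ℝ)

def dualityMap : X × Z × ℝ →ₗ[ℝ] Z × ℝ :=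
  (A.prod ℓ).coprod ((-LinearMap.inl ℝ Z ℝ).coprod (LinearMap.toSpanSingleton ℝ _ (-b, -r)))

lemma dualityMap_apply (x : X) (q : Z) (t : ℝ) :
    dualityMap A b ℓ r (x, q, t) = (A x - q - t • b, ℓ x - t * r) := by
  ext <;> simp [dualityMap, sub_eq_add_neg, add_assoc]

def dualityCone : PointedCone ℝ (Z × ℝ) :=
  PointedCone.map (dualityMap A b ℓ r) (P.prod (Q.prod (PointedCone.positive ℝ ℝ)))

variable {P Q A b ℓ r}

lemma mem_dualityCone {u : Z × ℝ} :
    u ∈ dualityCone P Q A b ℓ r ↔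
      ∃ x ∈ P, ∃ q ∈ Q, ∃ t : ℝ, 0 ≤ t ∧ (A x - q - t • b, ℓ x - t * r) = u := by
  simp [dualityCone, PointedCone.mem_map, dualityMap_apply, and_assoc]

/-- `(x + ε • xbar) / (t + ε)` is feasible for every `ε > 0`; let `ε → 0`. -/
lemma mul_le_of_sub_smul_mem {xbar : X} (hxbar : xbar ∈ P) (hfeas : A xbar - b ∈ Q)
    (hr : ∀ x ∈ P, A x - b ∈ Q → r ≤ ℓ x) {x : X} {t : ℝ} (hx : x ∈ P) (ht : 0 ≤ t)
    (hxt : A x - t • b ∈ Q) : t * r ≤ ℓ x := by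
  have hbound : ∀ ε > 0, (t + ε) * r ≤ ℓ x + ε * ℓ xbar := by
    intro ε hε
    have hpos : 0 < t + ε := by linarith
    have hmem : (t + ε)⁻¹ • ((A x - t • b) + ε • (A xbar - b)) =
        A ((t + ε)⁻¹ • (x + ε • xbar)) - b := by
      calc _ = (t + ε)⁻¹ • (A (x + ε • xbar) - (t + ε) • b) := by
            rw [map_add, map_smul]; module
        _ = _ := by rw [smul_sub, smul_smul, inv_mul_cancel₀ hpos.ne', one_smul, map_smul]
    have := hr _ (P.smul_mem (inv_nonneg.2 hpos.le) (P.add_mem hx (P.smul_mem hε.le hxbar)))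
      (hmem ▸ Q.smul_mem (inv_nonneg.2 hpos.le) (Q.add_mem hxt (Q.smul_mem hε.le hfeas)))
    rwa [map_smul, smul_eq_mul, map_add, map_smul, smul_eq_mul, le_inv_mul_iff₀ hpos] at this
  have hlim : Tendsto (fun ε => (t + ε) * r - ε * ℓ xbar) (𝓝[>] 0) (𝓝 (t * r)) := by
    have hcont : Continuous fun ε : ℝ => (t + ε) * r - ε * ℓ xbar := by fun_prop
    simpa using (hcont.tendsto 0).mono_left nhdsWithin_le_nhds
  exact le_of_tendsto hlim (eventually_nhdsWithin_of_forall fun ε hε => by linarith [hbound ε hε])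

lemma snd_nonneg_of_mem_dualityCone {xbar : X} (hxbar : xbar ∈ P) (hfeas : A xbar - b ∈ Q)
    (hr : ∀ x ∈ P, A x - b ∈ Q → r ≤ ℓ x) {u : Z × ℝ} (hu : u ∈ dualityCone P Q A b ℓ r)
    (hu₁ : u.1 = 0) : 0 ≤ u.2 := by
  obtain ⟨x, hx, q, hq, t, ht, rfl⟩ := mem_dualityCone.1 hu
  have hxt : A x - t • b = q := by
    rw [← sub_eq_zero, ← hu₁, sub_right_comm]
  linarith [mul_le_of_sub_smul_mem hxbar hfeas hr hx ht (hxt ▸ hq)]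

lemma exists_add_mem_dualityCone {xbar : X} (hxbar : xbar ∈ P)
    (hcore : A xbar - b ∈ algebraicCore (Q : Set Z)) (u : Z × ℝ) :
    ∃ a : ℝ, (0, a) + u ∈ dualityCone P Q A b ℓ r := by
  obtain ⟨τ, hτ, hQ⟩ := hcore (-u.1)
  have hτ' : 0 ≤ τ⁻¹ := inv_nonneg.2 hτ.le
  refine ⟨ℓ (τ⁻¹ • xbar) - τ⁻¹ * r - u.2, mem_dualityCone.2 ⟨τ⁻¹ • xbar, P.smul_mem hτ' hxbar,
    τ⁻¹ • (A xbar - b + τ • -u.1), Q.smul_mem hτ' (hQ τ hτ.le le_rfl), τ⁻¹, hτ', ?_⟩⟩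
  ext
  · rw [Prod.fst_add, map_smul, smul_add, smul_sub, smul_smul, inv_mul_cancel₀ hτ.ne', one_smul]
    dsimp only
    abel
  · simp

theorem exists_dual_certificate_of_slater {xbar : X} (hxbar : xbar ∈ P)
    (hcore : A xbar - b ∈ algebraicCore (Q : Set Z)) (hr : ∀ x ∈ P, A x - b ∈ Q → r ≤ ℓ x) :
    ∃ w : Module.Dual ℝ Z, (∀ q ∈ Q, 0 ≤ w q) ∧ (∀ x ∈ P, w (A x) ≤ ℓ x) ∧ r ≤ w b := by
  let f : Z × ℝ →ₗ.[ℝ] ℝ :=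
    ⟨LinearMap.ker (LinearMap.fst ℝ Z ℝ), (LinearMap.snd ℝ Z ℝ).domRestrict _⟩
  obtain ⟨g, hgf, hg⟩ := riesz_extension (dualityCone P Q A b ℓ r) f
    (fun u hu => snd_nonneg_of_mem_dualityCone hxbar (algebraicCore_subset _ hcore) hr hu u.2)
    (fun u => let ⟨a, ha⟩ := exists_add_mem_dualityCone hxbar hcore u; ⟨⟨(0, a), rfl⟩, ha⟩)
  have hg_apply : ∀ z α, g (z, α) = g (z, 0) + α := by
    intro z α
    have h1 : g (0, 1) = 1 := hgf ⟨(0, 1), rfl⟩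
    calc g (z, α) = g ((z, 0) + α • (0, 1)) := by simp
      _ = g (z, 0) + α := by rw [map_add, map_smul, h1, smul_eq_mul, mul_one]
  set w : Module.Dual ℝ Z := -(g.comp (LinearMap.inl ℝ Z ℝ))
  have hgw : ∀ z, g (z, 0) = -w z := fun z => by simp [w]
  have hg_cone : ∀ x ∈ P, ∀ q ∈ Q, ∀ t : ℝ, 0 ≤ t →
      w (A x) - w q - t * w b ≤ ℓ x - t * r := by
    intro x hx q hq t ht
    have := hg _ (mem_dualityCone.2 ⟨x, hx, q, hq, t, ht, rfl⟩)
    rw [hg_apply, hgw, map_sub, map_sub, map_smul, smul_eq_mul] at this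
    linarith
  refine ⟨w, fun q hq => ?_, fun x hx => ?_, ?_⟩
  · simpa using hg_cone 0 P.zero_mem q hq 0 le_rfl
  · simpa using hg_cone x hx 0 Q.zero_mem 0 le_rfl
  · simpa using hg_cone 0 P.zero_mem 0 Q.zero_mem 1 zero_le_one

end ConicDuality

theorem K_eq_M_algebraic_general
    {X Z : Type*} [AddCommGroup X] [Module ℝ X] [AddCommGroup Z] [Module ℝ Z]
    (A : X →ₗ[ℝ] Z)
    (P : Set X) (Q : Set Z)
    (hPcone : ∀ s t : ℝ, 0 ≤ s → 0 ≤ t → ∀ u ∈ P, ∀ v ∈ P, s • u + t • v ∈ P)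
    (hQcone : ∀ s t : ℝ, 0 ≤ s → 0 ≤ t → ∀ u ∈ Q, ∀ v ∈ Q, s • u + t • v ∈ Q)
    (b : Z) (c : Module.Dual ℝ X)
    (Pstar : Set (Module.Dual ℝ X)) (hPstar : Pstar = {y | ∀ x ∈ P, 0 ≤ y x})
    (Qstar : Set (Module.Dual ℝ Z)) (hQstar : Qstar = {w | ∀ z ∈ Q, 0 ≤ w z})
    (FP : Set X) (hFP : FP = {x ∈ P | A x - b ∈ Q})
    (Kset : Set (Module.Dual ℝ X × ℝ))
    (hK : Kset = {p | ∃ w ∈ Qstar, ∃ y ∈ Pstar, p.1 = c - A.dualMap w - y ∧ p.2 ≤ w b})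
    (Mset : Set (Module.Dual ℝ X × ℝ))
    (hM : Mset = {p | ∀ x ∈ FP, p.2 ≤ (c - p.1) x})
    (hcore : ∃ xbar ∈ P, A xbar - b ∈ algebraicCore Q) :
    Kset = Mset := by
  subst hPstar hQstar hFP hK hM
  obtain ⟨xbar, hxbar, hslater⟩ := hcore
  let P' : PointedCone ℝ X := .ofConeComb P ⟨xbar, hxbar⟩
    fun u hu v hv s hs t ht => hPcone s t hs ht u hu v hv
  let Q' : PointedCone ℝ Z := .ofConeComb Q ⟨_, algebraicCore_subset Q hslater⟩
    fun u hu v hv s hs t ht => hQcone s t hs ht u hu v hv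
  ext ⟨y, r⟩
  constructor
  · rintro ⟨w, hwQ, p, hpP, rfl, hr⟩ x ⟨hxP, hxQ⟩
    have hwx : w b ≤ w (A x) := by simpa using hwQ _ hxQ
    have hpx := hpP x hxP
    simp only [LinearMap.sub_apply, LinearMap.dualMap_apply]
    linarith
  · intro hyr
    obtain ⟨w, hwQ, hwP, hwb⟩ := ConicDuality.exists_dual_certificate_of_slater
      (P := P') (Q := Q') (ℓ := c - y) hxbar hslater fun x hx hxQ => hyr x ⟨hx, hxQ⟩
    refine ⟨w, hwQ, c - A.dualMap w - y, fun x hx => ?_, by abel, hwb⟩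
    simpa [le_sub_comm] using hwP x hx

theorem K_eq_M_algebraic
    {X Z : Type*} [AddCommGroup X] [Module ℝ X] [AddCommGroup Z] [Module ℝ Z]
    (A : X →ₗ[ℝ] Z)
    (P : Set X) (Q : Set Z)
    (hPne : P.Nonempty)
    (hPcone : ∀ s t : ℝ, 0 ≤ s → 0 ≤ t → ∀ u ∈ P, ∀ v ∈ P, s • u + t • v ∈ P)
    (hQne : Q.Nonempty)
    (hQcone : ∀ s t : ℝ, 0 ≤ s → 0 ≤ t → ∀ u ∈ Q, ∀ v ∈ Q, s • u + t • v ∈ Q)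
    (b : Z) (c : Module.Dual ℝ X)
    (Pstar : Set (Module.Dual ℝ X)) (hPstar : Pstar = {y | ∀ x ∈ P, 0 ≤ y x})
    (Qstar : Set (Module.Dual ℝ Z)) (hQstar : Qstar = {w | ∀ z ∈ Q, 0 ≤ w z})
    (FP : Set X) (hFP : FP = {x ∈ P | A x - b ∈ Q})
    (FD : Set (Module.Dual ℝ Z)) (hFD : FD = {w ∈ Qstar | c - A.dualMap w ∈ Pstar})
    (Kset : Set (Module.Dual ℝ X × ℝ))
    (hK : Kset = {p | ∃ w ∈ Qstar, ∃ y ∈ Pstar, p.1 = c - A.dualMap w - y ∧ p.2 ≤ w b})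
    (Mset : Set (Module.Dual ℝ X × ℝ))
    (hM : Mset = {p | ∀ x ∈ FP, p.2 ≤ (c - p.1) x})
    (hcore : ∃ xbar ∈ P, A xbar - b ∈ algebraicCore Q) :
    Kset = Mset :=
  K_eq_M_algebraic_general A P Q hPcone hQcone b c Pstar hPstar Qstar hQstar FP hFP Kset hK Mset hM
    hcore
end

section
/- Assume F(D) ≠ ∅. Then the closure of H in the weak topology σ(Z × ℝ, W × ℝ) equals N. -/
open Set Filter Topology

/-!
Weak duality gives `H ⊆ N`, and `N` is an intersection of weakly closed half-spaces, so
`closure H ⊆ N`. Conversely, a point `(z, r) ∈ N` outside the closure of the convex set `H` is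
strictly separated from it by a weakly continuous functional, which is a pairing with some
`(w, β) ∈ W × ℝ`. As `H` is a translate of a cone, a functional bounded above on it is
nonpositive on that cone: `w ∈ Q*`, `-β ≥ 0` and `(-β) c - A* w ∈ P*`. Moving such a pair
towards a dual feasible point `w₀`, the vectors `(-β + t)⁻¹ (w + t w₀)` are dual feasible for
`t > 0`, and letting `t → 0` the inequality defining `N` gives `⟨b + z, w⟩ ≤ -β r`,
contradicting the separation.
-/

lemma nonpos_of_forall_nonneg_mul_le {d u : ℝ} (h : ∀ t : ℝ, 0 ≤ t → t * d ≤ u) : d ≤ 0 := by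
  by_contra! hd
  have := h ((|u| + 1) / d) (by positivity)
  rw [div_mul_cancel₀ _ hd.ne'] at this
  linarith [le_abs_self u]

lemma nonpos_of_forall_pos_le_mul {a d : ℝ} (h : ∀ t : ℝ, 0 < t → a ≤ t * d) : a ≤ 0 := by
  have hlim : Tendsto (fun t : ℝ => t * d) (𝓝[>] 0) (𝓝 0) := by
    simpa using ((continuous_mul_const d).tendsto 0).mono_left nhdsWithin_le_nhds
  exact ge_of_tendsto hlim (eventually_nhdsWithin_of_forall h)

lemma PointedCone.exists_coe_eq {M : Type*} [AddCommGroup M] [Module ℝ M] {s : Set M}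
    (hne : s.Nonempty) (hs : ∀ a b : ℝ, 0 ≤ a → 0 ≤ b → ∀ u ∈ s, ∀ v ∈ s, a • u + b • v ∈ s) :
    ∃ K : PointedCone ℝ M, (K : Set M) = s := by
  obtain ⟨u, hu⟩ := hne
  refine ⟨{ carrier := s
            add_mem' := fun hx hy => by simpa using hs 1 1 zero_le_one zero_le_one _ hx _ hy
            zero_mem' := by simpa using hs 0 0 le_rfl le_rfl u hu u hu
            smul_mem' := fun c x hx => by simpa using hs c 0 c.2 le_rfl x hx x hx }, rfl⟩

section prodRealPairing

variable {Z W : Type*} [AddCommGroup Z] [Module ℝ Z] [AddCommGroup W] [Module ℝ W]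

noncomputable def LinearMap.prodRealPairing (pZ : Z →ₗ[ℝ] W →ₗ[ℝ] ℝ) :
    (Z × ℝ) →ₗ[ℝ] (W × ℝ) →ₗ[ℝ] ℝ :=
  pZ.compl₁₂ (.fst ℝ Z ℝ) (.fst ℝ W ℝ) + (LinearMap.mul ℝ ℝ).compl₁₂ (.snd ℝ Z ℝ) (.snd ℝ W ℝ)

@[simp]
lemma LinearMap.prodRealPairing_apply (pZ : Z →ₗ[ℝ] W →ₗ[ℝ] ℝ) (p : Z × ℝ) (q : W × ℝ) :
    pZ.prodRealPairing p q = pZ p.1 q.1 + p.2 * q.2 := rfl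

end prodRealPairing

namespace ConicProgram

open PointedCone

variable {X Y Z W : Type*} [AddCommGroup X] [Module ℝ X] [AddCommGroup Y] [Module ℝ Y]
  [AddCommGroup Z] [Module ℝ Z] [AddCommGroup W] [Module ℝ W]
  (pX : X →ₗ[ℝ] Y →ₗ[ℝ] ℝ) (pZ : Z →ₗ[ℝ] W →ₗ[ℝ] ℝ) (A : X →ₗ[ℝ] Z) (Astar : W →ₗ[ℝ] Y)
  (P : PointedCone ℝ X) (Q : PointedCone ℝ Z) (b : Z) (c : Y)

def dualFeasibleSet : Set W := {w | w ∈ dual pZ (Q : Set Z) ∧ c - Astar w ∈ dual pX (P : Set X)}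

def primalValueEpigraph : Set (Z × ℝ) :=
  {p | ∃ x ∈ P, ∃ q ∈ Q, p.1 = A x - b - q ∧ pX x c ≤ p.2}

def dualValueEpigraph : Set (Z × ℝ) :=
  {p | ∀ w ∈ dualFeasibleSet pX pZ Astar P Q c, pZ (b + p.1) w ≤ p.2}

variable {pX pZ A Astar P Q b c}

theorem primalValueEpigraph_subset_dualValueEpigraph
    (hadj : ∀ (x : X) (w : W), pX x (Astar w) = pZ (A x) w) :
    primalValueEpigraph pX A P Q b c ⊆ dualValueEpigraph pX pZ Astar P Q b c := by
  rintro ⟨z, r⟩ ⟨x, hx, q, hq, rfl, hxr⟩ w ⟨hwQ, hwP⟩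
  have hq' := hwQ hq
  have hx' := hwP hx
  simp only [map_sub, LinearMap.sub_apply, hadj, map_add, LinearMap.add_apply] at hx' hxr ⊢
  linarith

variable (pX pZ Astar P Q b c) in
theorem isClosed_dualValueEpigraph :
    IsClosed (X := WeakBilin pZ.prodRealPairing) (dualValueEpigraph pX pZ Astar P Q b c) := by
  have : dualValueEpigraph pX pZ Astar P Q b c = ⋂ w ∈ dualFeasibleSet pX pZ Astar P Q c,
      {p | pZ.prodRealPairing p (w, -1) ≤ -pZ b w} := by
    ext p
    simp only [dualValueEpigraph, mem_iInter, mem_ofPred_eq, LinearMap.prodRealPairing_apply,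
      map_add, LinearMap.add_apply]
    refine forall₂_congr fun w _ => ?_
    constructor <;> intro h <;> linarith
  rw [this]
  exact isClosed_biInter fun w _ => isClosed_le (WeakBilin.eval_continuous _ _) continuous_const

variable (pX A P Q b c) in
theorem convex_primalValueEpigraph : Convex ℝ (primalValueEpigraph pX A P Q b c) := by
  rintro _ ⟨x₁, hx₁, q₁, hq₁, h₁, hr₁⟩ _ ⟨x₂, hx₂, q₂, hq₂, h₂, hr₂⟩ s t hs ht hst
  refine ⟨s • x₁ + t • x₂, P.convex hx₁ hx₂ hs ht hst, s • q₁ + t • q₂,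
    Q.convex hq₁ hq₂ hs ht hst, ?_, ?_⟩
  · obtain rfl : t = 1 - s := by linarith
    simp only [Prod.fst_add, Prod.smul_fst, h₁, h₂, map_add, map_smul]
    module
  · simp only [Prod.snd_add, Prod.smul_snd, map_add, map_smul, LinearMap.add_apply,
      LinearMap.smul_apply, smul_eq_mul]
    gcongr

theorem mem_dual_of_forall_lt (hadj : ∀ (x : X) (w : W), pX x (Astar w) = pZ (A x) w)
    {w : W} {β u : ℝ}
    (hsep : ∀ p ∈ primalValueEpigraph pX A P Q b c, pZ.prodRealPairing p (w, β) < u) :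
    0 ≤ -β ∧ w ∈ dual pZ (Q : Set Z) ∧ (-β) • c - Astar w ∈ dual pX (P : Set X) := by
  have hsep' : ∀ x ∈ P, ∀ q ∈ Q, ∀ r, pX x c ≤ r →
      pZ (A x) w - pZ q w + r * β ≤ u + pZ b w := fun x hx q hq r hr => by
    have := hsep (A x - b - q, r) ⟨x, hx, q, hq, rfl, hr⟩
    simp only [LinearMap.prodRealPairing_apply, map_sub, LinearMap.sub_apply] at this
    linarith
  refine ⟨?_, fun q hq => ?_, fun x hx => ?_⟩
  · refine neg_nonneg.mpr (nonpos_of_forall_nonneg_mul_le (u := u + pZ b w) fun t ht => ?_)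
    simpa using hsep' 0 P.zero_mem 0 Q.zero_mem t (by simpa using ht)
  · refine neg_nonpos.mp (nonpos_of_forall_nonneg_mul_le (u := u + pZ b w) fun t ht => ?_)
    simpa using hsep' 0 P.zero_mem (t • q) (Q.smul_mem ht hq) 0 (by simp)
  · have := nonpos_of_forall_nonneg_mul_le (d := pZ (A x) w + pX x c * β) (u := u + pZ b w)
      fun t ht => by
        simpa [mul_add, mul_assoc] using hsep' (t • x) (P.smul_mem ht hx) 0 Q.zero_mem _ le_rfl
    simp only [map_sub, map_smul, hadj, smul_eq_mul]
    linarith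

theorem le_mul_of_forall_mem_dualFeasibleSet {w₀ : W}
    (hw₀ : w₀ ∈ dualFeasibleSet pX pZ Astar P Q c) {v : Z} {r : ℝ}
    (hvr : ∀ w ∈ dualFeasibleSet pX pZ Astar P Q c, pZ v w ≤ r) {w : W} {s : ℝ} (hs : 0 ≤ s)
    (hwQ : w ∈ dual pZ (Q : Set Z)) (hwP : s • c - Astar w ∈ dual pX (P : Set X)) :
    pZ v w ≤ s * r := by
  suffices ∀ t : ℝ, 0 < t → pZ v w - s * r ≤ t * (r - pZ v w₀) by
    linarith [nonpos_of_forall_pos_le_mul this]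
  intro t ht
  have hst : 0 < s + t := by linarith
  have hmem : (s + t)⁻¹ • (w + t • w₀) ∈ dualFeasibleSet pX pZ Astar P Q c := by
    refine ⟨(dual _ _).smul_mem (by positivity) (add_mem hwQ ((dual _ _).smul_mem ht.le hw₀.1)),
      fun x hx => ?_⟩
    have h₁ := hwP hx
    have h₂ := hw₀.2 hx
    simp only [map_sub, map_smul, map_add, smul_eq_mul] at h₁ h₂ ⊢
    rw [show pX x c - (s + t)⁻¹ * (pX x (Astar w) + t * pX x (Astar w₀)) =
      (s + t)⁻¹ * ((s * pX x c - pX x (Astar w)) + t * (pX x c - pX x (Astar w₀))) by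
        field_simp; ring]
    positivity
  have := hvr _ hmem
  rw [map_smul, map_add, map_smul, smul_eq_mul, smul_eq_mul, inv_mul_le_iff₀ hst] at this
  linarith

theorem closure_primalValueEpigraph (hadj : ∀ (x : X) (w : W), pX x (Astar w) = pZ (A x) w)
    (hFD : (dualFeasibleSet pX pZ Astar P Q c).Nonempty) :
    closure (X := WeakBilin pZ.prodRealPairing) (primalValueEpigraph pX A P Q b c) =
      dualValueEpigraph pX pZ Astar P Q b c := by
  refine (closure_minimal (X := WeakBilin pZ.prodRealPairing)
    (primalValueEpigraph_subset_dualValueEpigraph hadj)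
    (isClosed_dualValueEpigraph ..)).antisymm fun p hp => ?_
  by_contra hpH
  obtain ⟨f, u, hfH, hfp⟩ := geometric_hahn_banach_closed_point
    ((convex_primalValueEpigraph ..).closure (E := WeakBilin pZ.prodRealPairing)) isClosed_closure hpH
  obtain ⟨⟨w, β⟩, rfl⟩ := LinearMap.dualEmbedding_surjective _ f
  have hsep : ∀ a ∈ primalValueEpigraph pX A P Q b c, pZ.prodRealPairing a (w, β) < u :=
    fun a ha => hfH a (subset_closure ha)
  obtain ⟨hβ, hwQ, hwP⟩ := mem_dual_of_forall_lt hadj hsep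
  obtain ⟨w₀, hw₀⟩ := hFD
  have hb := hsep (-b, 0) ⟨0, P.zero_mem, 0, Q.zero_mem, by simp, by simp⟩
  have hpw : u < pZ p.1 w + p.2 * β := hfp
  have hbp := le_mul_of_forall_mem_dualFeasibleSet hw₀ hp hβ hwQ hwP
  simp only [LinearMap.prodRealPairing_apply, map_add, map_neg, LinearMap.add_apply,
    LinearMap.neg_apply, zero_mul, add_zero] at hb hbp
  linarith

end ConicProgram

theorem closure_H_eq_N_general
    {X Y Z W : Type*} [AddCommGroup X] [Module ℝ X] [AddCommGroup Y] [Module ℝ Y]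
    [AddCommGroup Z] [Module ℝ Z] [AddCommGroup W] [Module ℝ W]
    (pX : X →ₗ[ℝ] Y →ₗ[ℝ] ℝ) (pZ : Z →ₗ[ℝ] W →ₗ[ℝ] ℝ)
    (A : X →ₗ[ℝ] Z) (Astar : W →ₗ[ℝ] Y)
    (hadj : ∀ (x : X) (w : W), pX x (Astar w) = pZ (A x) w)
    (P : Set X) (Q : Set Z)
    (hPne : P.Nonempty)
    (hPcone : ∀ s t : ℝ, 0 ≤ s → 0 ≤ t → ∀ u ∈ P, ∀ v ∈ P, s • u + t • v ∈ P)
    (hQne : Q.Nonempty)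
    (hQcone : ∀ s t : ℝ, 0 ≤ s → 0 ≤ t → ∀ u ∈ Q, ∀ v ∈ Q, s • u + t • v ∈ Q)
    (b : Z) (c : Y)
    (Pstar : Set Y) (hPstar : Pstar = {y : Y | ∀ x ∈ P, 0 ≤ pX x y})
    (Qstar : Set W) (hQstar : Qstar = {w : W | ∀ z ∈ Q, 0 ≤ pZ z w})
    (FD : Set W) (hFD : FD = {w ∈ Qstar | c - Astar w ∈ Pstar})
    (Hset : Set (Z × ℝ))
    (hH : Hset = {p : Z × ℝ | ∃ x ∈ P, ∃ q ∈ Q, p.1 = A x - b - q ∧ pX x c ≤ p.2})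
    (Nset : Set (Z × ℝ))
    (hN : Nset = {p : Z × ℝ | ∀ w ∈ FD, pZ (b + p.1) w ≤ p.2})
    (hFDne : FD.Nonempty) :
    @closure (Z × ℝ)
      (TopologicalSpace.induced
        (fun p : Z × ℝ => (fun q : W × ℝ => pZ p.1 q.1 + p.2 * q.2))
        Pi.topologicalSpace) Hset = Nset := by
  obtain ⟨P, rfl⟩ := PointedCone.exists_coe_eq hPne hPcone
  obtain ⟨Q, rfl⟩ := PointedCone.exists_coe_eq hQne hQcone
  subst hPstar hQstar hFD hH hN
  exact ConicProgram.closure_primalValueEpigraph hadj hFDne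

theorem closure_H_eq_N
    {X Y Z W : Type*} [AddCommGroup X] [Module ℝ X] [AddCommGroup Y] [Module ℝ Y]
    [AddCommGroup Z] [Module ℝ Z] [AddCommGroup W] [Module ℝ W]
    (pX : X →ₗ[ℝ] Y →ₗ[ℝ] ℝ) (pZ : Z →ₗ[ℝ] W →ₗ[ℝ] ℝ)
    (A : X →ₗ[ℝ] Z) (Astar : W →ₗ[ℝ] Y)
    (hadj : ∀ (x : X) (w : W), pX x (Astar w) = pZ (A x) w)
    (P : Set X) (Q : Set Z)
    (hPne : P.Nonempty)
    (hPcone : ∀ s t : ℝ, 0 ≤ s → 0 ≤ t → ∀ u ∈ P, ∀ v ∈ P, s • u + t • v ∈ P)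
    (hQne : Q.Nonempty)
    (hQcone : ∀ s t : ℝ, 0 ≤ s → 0 ≤ t → ∀ u ∈ Q, ∀ v ∈ Q, s • u + t • v ∈ Q)
    (b : Z) (c : Y)
    (Pstar : Set Y) (hPstar : Pstar = {y : Y | ∀ x ∈ P, 0 ≤ pX x y})
    (Qstar : Set W) (hQstar : Qstar = {w : W | ∀ z ∈ Q, 0 ≤ pZ z w})
    (FP : Set X) (hFP : FP = {x ∈ P | A x - b ∈ Q})
    (FD : Set W) (hFD : FD = {w ∈ Qstar | c - Astar w ∈ Pstar})
    (hXsep : ∀ x : X, (∀ y : Y, pX x y = 0) → x = 0)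
    (hYsep : ∀ y : Y, (∀ x : X, pX x y = 0) → y = 0)
    (hZsep : ∀ z : Z, (∀ w : W, pZ z w = 0) → z = 0)
    (hWsep : ∀ w : W, (∀ z : Z, pZ z w = 0) → w = 0)
    (Hset : Set (Z × ℝ))
    (hH : Hset = {p : Z × ℝ | ∃ x ∈ P, ∃ q ∈ Q, p.1 = A x - b - q ∧ pX x c ≤ p.2})
    (Nset : Set (Z × ℝ))
    (hN : Nset = {p : Z × ℝ | ∀ w ∈ FD, pZ (b + p.1) w ≤ p.2})
    (hFDne : FD.Nonempty) :
    @closure (Z × ℝ)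
      (TopologicalSpace.induced
        (fun p : Z × ℝ => (fun q : W × ℝ => pZ p.1 q.1 + p.2 * q.2))
        Pi.topologicalSpace) Hset = Nset :=
  closure_H_eq_N_general pX pZ A Astar hadj P Q hPne hPcone hQne hQcone b c Pstar hPstar Qstar
    hQstar FD hFD Hset hH Nset hN hFDne
end

section
/- Assume F(P) ≠ ∅, that P is closed in the weak topology σ(X, Y), and that Q is closed in the weak topology σ(Z, W). Then the closure of K in the weak topology σ(Y × ℝ, X × ℝ) equals M. -/
/-!
`M` is weakly closed, being an intersection of half-spaces, and contains `K` by weak duality.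
Conversely, a point outside `cl K` is strictly separated from the convex set `K` by a weakly
continuous functional, which has the form `(y, r) ↦ ⟨x, y⟩ + r β`. As `K` is the translate by
`(c, 0)` of a cone, being bounded above on `K` forces `β ≥ 0`, `x ∈ P** = P` and
`A x - β b ∈ Q** = Q` (bipolar theorem for weakly closed cones). Testing the point against the
feasible points `(1 + t β)⁻¹ (x₀ + t x)`, `t → ∞`, shows that it is not in `M` either.
-/

open Set

lemma nonneg_of_forall_nonneg_sub_mul_le {a b u : ℝ} (h : ∀ t : ℝ, 0 ≤ t → a - t * b ≤ u) :
    0 ≤ b := by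
  by_contra! hb
  have ha : a ≤ u := by simpa using h 0 le_rfl
  have := h ((u - a + 1) / -b) (div_nonneg (by linarith) (by linarith))
  rw [div_neg, neg_mul, div_mul_cancel₀ _ hb.ne] at this
  linarith

section Bipolar

universe u v

variable {E : Type u} {F : Type v} [AddCommGroup E] [Module ℝ E] [AddCommGroup F] [Module ℝ F]

def PointedCone.ofNonnegCombinations {P : Set E} (hne : P.Nonempty)
    (hP : ∀ s t : ℝ, 0 ≤ s → 0 ≤ t → ∀ u ∈ P, ∀ v ∈ P, s • u + t • v ∈ P) :
    PointedCone ℝ E where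
  carrier := P
  add_mem' hu hv := by simpa using hP 1 1 zero_le_one zero_le_one _ hu _ hv
  zero_mem' := by
    obtain ⟨u, hu⟩ := hne
    simpa using hP 0 0 le_rfl le_rfl _ hu _ hu
  smul_mem' c u hu := by simpa using hP c 0 c.2 le_rfl _ hu _ hu

lemma PointedCone.mem_of_forall_dual_nonneg (B : E →ₗ[ℝ] F →ₗ[ℝ] ℝ) {C : PointedCone ℝ E}
    (hC : IsClosed (X := WeakBilin B) (C : Set E)) {x : E}
    (hx : ∀ y ∈ PointedCone.dual B C, 0 ≤ B x y) : x ∈ C := by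
  by_contra hxC
  let C' : ProperCone ℝ (WeakBilin B) := ⟨C, hC⟩
  obtain ⟨f, hfC, hfx⟩ := C'.hyperplane_separation_point (E := WeakBilin B) hxC
  obtain ⟨y, rfl⟩ := LinearMap.dualEmbedding_surjective B f
  exact (hx y fun u hu => hfC u hu).not_gt hfx

end Bipolar

section ConicProgram

universe u₁ u₂ u₃ u₄

variable {X : Type u₁} {Y : Type u₂} {Z : Type u₃} {W : Type u₄}
  [AddCommGroup X] [Module ℝ X] [AddCommGroup Y] [Module ℝ Y]
  [AddCommGroup Z] [Module ℝ Z] [AddCommGroup W] [Module ℝ W]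
  (pX : X →ₗ[ℝ] Y →ₗ[ℝ] ℝ) (pZ : Z →ₗ[ℝ] W →ₗ[ℝ] ℝ) (A : X →ₗ[ℝ] Z) (Astar : W →ₗ[ℝ] Y)

def augmentedPairing : (Y × ℝ) →ₗ[ℝ] (X × ℝ) →ₗ[ℝ] ℝ :=
  pX.flip.compl₁₂ (LinearMap.fst ℝ Y ℝ) (LinearMap.fst ℝ X ℝ) +
    (LinearMap.mul ℝ ℝ).compl₁₂ (LinearMap.snd ℝ Y ℝ) (LinearMap.snd ℝ X ℝ)

@[simp] lemma augmentedPairing_apply (p : Y × ℝ) (q : X × ℝ) :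
    augmentedPairing pX p q = pX q.1 p.1 + p.2 * q.2 := rfl

section Sets

variable (P : Set X) (Q : Set Z) (b : Z) (c : Y)

def primalFeasibleSet : Set X := {x ∈ P | A x - b ∈ Q}

def perturbedValueHypograph : Set (Y × ℝ) :=
  {p | ∀ x ∈ primalFeasibleSet A P Q b, p.2 ≤ pX x (c - p.1)}

def dualValueSet : Set (Y × ℝ) :=
  {p | ∃ w ∈ PointedCone.dual pZ Q, ∃ y ∈ PointedCone.dual pX P,
    p.1 = c - Astar w - y ∧ p.2 ≤ pZ b w}

variable {pX pZ A Astar P Q b c}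

lemma dualValueSet_subset_perturbedValueHypograph
    (hadj : ∀ x w, pX x (Astar w) = pZ (A x) w) :
    dualValueSet pX pZ Astar P Q b c ⊆ perturbedValueHypograph pX A P Q b c := by
  rintro p ⟨w, hw, y, hy, hp, hr⟩ x ⟨hxP, hxQ⟩
  have hAw : 0 ≤ pZ (A x - b) w := hw hxQ
  have hAy : 0 ≤ pX x y := hy hxP
  rw [hp, sub_sub, sub_sub_cancel, map_add, hadj]
  simp only [map_sub, LinearMap.sub_apply] at hAw
  linarith

lemma isClosed_perturbedValueHypograph :
    IsClosed (X := WeakBilin (augmentedPairing pX)) (perturbedValueHypograph pX A P Q b c) := by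
  have : perturbedValueHypograph pX A P Q b c =
      ⋂ x ∈ primalFeasibleSet A P Q b, {p | augmentedPairing pX p (x, 1) ≤ pX x c} := by
    ext p
    simp only [perturbedValueHypograph, mem_iInter, mem_ofPred_eq, augmentedPairing_apply,
      map_sub]
    exact forall₂_congr fun x _ => by constructor <;> intro <;> linarith
  rw [this]
  exact isClosed_biInter fun x _ =>
    isClosed_le (WeakBilin.eval_continuous _ (x, 1)) continuous_const

lemma convex_dualValueSet : Convex ℝ (dualValueSet pX pZ Astar P Q b c) := by
  rintro p ⟨w₁, hw₁, y₁, hy₁, hp₁, hr₁⟩ q ⟨w₂, hw₂, y₂, hy₂, hq₁, hr₂⟩ s t hs ht hst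
  refine ⟨s • w₁ + t • w₂, (PointedCone.dual pZ Q).convex hw₁ hw₂ hs ht hst,
    s • y₁ + t • y₂, (PointedCone.dual pX P).convex hy₁ hy₂ hs ht hst, ?_, ?_⟩
  · simp only [Prod.fst_add, Prod.smul_fst, hp₁, hq₁, map_add, map_smul]
    linear_combination (norm := module) hst • c
  · simp only [Prod.snd_add, Prod.smul_snd, smul_eq_mul, map_add, map_smul]
    exact add_le_add (mul_le_mul_of_nonneg_left hr₁ hs) (mul_le_mul_of_nonneg_left hr₂ ht)

lemma dual_nonneg_of_forall_lt_on_dualValueSet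
    (hadj : ∀ x w, pX x (Astar w) = pZ (A x) w) {x : X} {β u : ℝ}
    (h : ∀ p ∈ dualValueSet pX pZ Astar P Q b c, augmentedPairing pX p (x, β) < u) :
    pX x c < u ∧ 0 ≤ β ∧ (∀ y ∈ PointedCone.dual pX P, 0 ≤ pX x y) ∧
      ∀ w ∈ PointedCone.dual pZ Q, 0 ≤ pZ (A x - β • b) w := by
  have hK : ∀ w ∈ PointedCone.dual pZ Q, ∀ y ∈ PointedCone.dual pX P, ∀ r ≤ pZ b w,
      pX x c - pZ (A x) w - pX x y + r * β < u := fun w hw y hy r hr => by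
    simpa [← hadj] using h (c - Astar w - y, r) ⟨w, hw, y, hy, rfl, hr⟩
  have h0 := hK 0 (zero_mem _) 0 (zero_mem _)
  simp only [map_zero, sub_zero] at h0
  refine ⟨by simpa using h0 0 le_rfl, ?_, fun y hy => ?_, fun w hw => ?_⟩
  · refine nonneg_of_forall_nonneg_sub_mul_le (a := pX x c) (u := u) fun t ht => ?_
    linarith [h0 (-t) (by simpa using ht)]
  · refine nonneg_of_forall_nonneg_sub_mul_le (a := pX x c) (u := u) fun t ht => ?_
    have := hK 0 (zero_mem _) (t • y) ((PointedCone.dual pX P).smul_mem ht hy) 0 (by simp)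
    simp only [map_zero, map_smul, smul_eq_mul] at this
    linarith
  · refine nonneg_of_forall_nonneg_sub_mul_le (a := pX x c) (u := u) fun t ht => ?_
    have := hK (t • w) ((PointedCone.dual pZ Q).smul_mem ht hw) 0 (zero_mem _) (t * pZ b w)
      (by simp)
    simp only [map_zero, map_smul, smul_eq_mul, map_sub, LinearMap.sub_apply,
      LinearMap.smul_apply] at this ⊢
    linarith

end Sets

variable {pX pZ A Astar} {P : PointedCone ℝ X} {Q : PointedCone ℝ Z} {b : Z} {c : Y}

lemma inv_smul_add_smul_mem_primalFeasibleSet {x₀ x : X}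
    (hx₀ : x₀ ∈ primalFeasibleSet A P Q b) (hx : x ∈ P) {β : ℝ} (hβ : 0 ≤ β)
    (hxβ : A x - β • b ∈ Q) {t : ℝ} (ht : 0 ≤ t) :
    (1 + t * β)⁻¹ • (x₀ + t • x) ∈ primalFeasibleSet A P Q b := by
  have hpos : 0 < 1 + t * β := by positivity
  have hs : 0 ≤ (1 + t * β)⁻¹ := inv_nonneg.mpr hpos.le
  refine ⟨?_, ?_⟩
  · simpa only [smul_add, smul_smul, SetLike.mem_coe] using
      P.add_mem (P.smul_mem hs hx₀.1) (P.smul_mem (mul_nonneg hs ht) hx)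
  · have key : A ((1 + t * β)⁻¹ • (x₀ + t • x)) - b =
        (1 + t * β)⁻¹ • (A x₀ - b) + ((1 + t * β)⁻¹ * t) • (A x - β • b) := by
      simp only [map_smul, map_add]
      linear_combination (norm := module) (inv_mul_cancel₀ hpos.ne') • b
    rw [key]
    exact Q.add_mem (Q.smul_mem hs hx₀.2) (Q.smul_mem (mul_nonneg hs ht) hxβ)

lemma mul_le_of_mem_perturbedValueHypograph {x₀ x : X}
    (hx₀ : x₀ ∈ primalFeasibleSet A P Q b) (hx : x ∈ P) {β : ℝ} (hβ : 0 ≤ β)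
    (hxβ : A x - β • b ∈ Q) {p : Y × ℝ} (hp : p ∈ perturbedValueHypograph pX A P Q b c) :
    p.2 * β ≤ pX x (c - p.1) := by
  refine sub_nonneg.mp (nonneg_of_forall_nonneg_sub_mul_le (a := p.2)
    (u := pX x₀ (c - p.1)) fun t ht => ?_)
  have hpos : 0 < 1 + t * β := by positivity
  have := hp _ (inv_smul_add_smul_mem_primalFeasibleSet hx₀ hx hβ hxβ ht)
  rw [map_smul, map_add, map_smul, LinearMap.smul_apply, LinearMap.add_apply,
    LinearMap.smul_apply, smul_eq_mul, smul_eq_mul, le_inv_mul_iff₀ hpos] at this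
  linear_combination this

lemma perturbedValueHypograph_subset_closure_dualValueSet
    (hadj : ∀ x w, pX x (Astar w) = pZ (A x) w) {x₀ : X}
    (hx₀ : x₀ ∈ primalFeasibleSet A P Q b)
    (hP : IsClosed (X := WeakBilin pX) (P : Set X))
    (hQ : IsClosed (X := WeakBilin pZ) (Q : Set Z)) :
    perturbedValueHypograph pX A P Q b c ⊆
      closure (X := WeakBilin (augmentedPairing pX)) (dualValueSet pX pZ Astar P Q b c) := by
  intro p hp
  by_contra hpK
  obtain ⟨f, u, hfK, hfp⟩ := geometric_hahn_banach_closed_point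
    (Convex.closure (E := WeakBilin (augmentedPairing pX)) convex_dualValueSet)
    isClosed_closure hpK
  obtain ⟨⟨x, β⟩, rfl⟩ := LinearMap.dualEmbedding_surjective _ f
  obtain ⟨hxc, hβ, hxP, hxQ⟩ :=
    dual_nonneg_of_forall_lt_on_dualValueSet hadj fun q hq => hfK q (subset_closure hq)
  have := mul_le_of_mem_perturbedValueHypograph hx₀
    (PointedCone.mem_of_forall_dual_nonneg pX hP hxP) hβ
    (PointedCone.mem_of_forall_dual_nonneg pZ hQ hxQ) hp
  change u < pX x p.1 + p.2 * β at hfp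
  rw [map_sub] at this
  linarith

end ConicProgram

theorem closure_K_eq_M_general
    {X Y Z W : Type*} [AddCommGroup X] [Module ℝ X] [AddCommGroup Y] [Module ℝ Y]
    [AddCommGroup Z] [Module ℝ Z] [AddCommGroup W] [Module ℝ W]
    (pX : X →ₗ[ℝ] Y →ₗ[ℝ] ℝ) (pZ : Z →ₗ[ℝ] W →ₗ[ℝ] ℝ)
    (A : X →ₗ[ℝ] Z) (Astar : W →ₗ[ℝ] Y)
    (hadj : ∀ (x : X) (w : W), pX x (Astar w) = pZ (A x) w)
    (P : Set X) (Q : Set Z)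
    (hPcone : ∀ s t : ℝ, 0 ≤ s → 0 ≤ t → ∀ u ∈ P, ∀ v ∈ P, s • u + t • v ∈ P)
    (hQcone : ∀ s t : ℝ, 0 ≤ s → 0 ≤ t → ∀ u ∈ Q, ∀ v ∈ Q, s • u + t • v ∈ Q)
    (b : Z) (c : Y)
    (Pstar : Set Y) (hPstar : Pstar = {y : Y | ∀ x ∈ P, 0 ≤ pX x y})
    (Qstar : Set W) (hQstar : Qstar = {w : W | ∀ z ∈ Q, 0 ≤ pZ z w})
    (FP : Set X) (hFP : FP = {x ∈ P | A x - b ∈ Q})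
    (Kset : Set (Y × ℝ))
    (hK : Kset = {p : Y × ℝ | ∃ w ∈ Qstar, ∃ y ∈ Pstar, p.1 = c - Astar w - y ∧ p.2 ≤ pZ b w})
    (Mset : Set (Y × ℝ))
    (hM : Mset = {p : Y × ℝ | ∀ x ∈ FP, p.2 ≤ pX x (c - p.1)})
    (hFPne : FP.Nonempty)
    (hPclosed : @IsClosed X
      (TopologicalSpace.induced (fun x : X => (fun y : Y => pX x y)) Pi.topologicalSpace) P)
    (hQclosed : @IsClosed Z
      (TopologicalSpace.induced (fun z : Z => (fun w : W => pZ z w)) Pi.topologicalSpace) Q) :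
    @closure (Y × ℝ)
      (TopologicalSpace.induced
        (fun p : Y × ℝ => (fun q : X × ℝ => pX q.1 p.1 + p.2 * q.2))
        Pi.topologicalSpace) Kset = Mset := by
  subst hPstar hQstar hFP hK hM
  obtain ⟨x₀, hx₀⟩ := hFPne
  let CP := PointedCone.ofNonnegCombinations ⟨x₀, hx₀.1⟩ hPcone
  let CQ := PointedCone.ofNonnegCombinations ⟨_, hx₀.2⟩ hQcone
  -- the weak topologies of the statement are those of `WeakBilin pX`, `WeakBilin pZ` and
  -- `WeakBilin (augmentedPairing pX)`, up to definitional unfolding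
  change closure (X := WeakBilin (augmentedPairing pX)) (dualValueSet pX pZ Astar CP CQ b c) =
    perturbedValueHypograph pX A CP CQ b c
  exact (closure_minimal (X := WeakBilin (augmentedPairing pX))
    (dualValueSet_subset_perturbedValueHypograph hadj)
    isClosed_perturbedValueHypograph).antisymm
    (perturbedValueHypograph_subset_closure_dualValueSet hadj (P := CP) (Q := CQ) hx₀
      hPclosed hQclosed)

theorem closure_K_eq_M
    {X Y Z W : Type*} [AddCommGroup X] [Module ℝ X] [AddCommGroup Y] [Module ℝ Y]
    [AddCommGroup Z] [Module ℝ Z] [AddCommGroup W] [Module ℝ W]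
    (pX : X →ₗ[ℝ] Y →ₗ[ℝ] ℝ) (pZ : Z →ₗ[ℝ] W →ₗ[ℝ] ℝ)
    (A : X →ₗ[ℝ] Z) (Astar : W →ₗ[ℝ] Y)
    (hadj : ∀ (x : X) (w : W), pX x (Astar w) = pZ (A x) w)
    (P : Set X) (Q : Set Z)
    (hPne : P.Nonempty)
    (hPcone : ∀ s t : ℝ, 0 ≤ s → 0 ≤ t → ∀ u ∈ P, ∀ v ∈ P, s • u + t • v ∈ P)
    (hQne : Q.Nonempty)
    (hQcone : ∀ s t : ℝ, 0 ≤ s → 0 ≤ t → ∀ u ∈ Q, ∀ v ∈ Q, s • u + t • v ∈ Q)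
    (b : Z) (c : Y)
    (Pstar : Set Y) (hPstar : Pstar = {y : Y | ∀ x ∈ P, 0 ≤ pX x y})
    (Qstar : Set W) (hQstar : Qstar = {w : W | ∀ z ∈ Q, 0 ≤ pZ z w})
    (FP : Set X) (hFP : FP = {x ∈ P | A x - b ∈ Q})
    (FD : Set W) (hFD : FD = {w ∈ Qstar | c - Astar w ∈ Pstar})
    (hXsep : ∀ x : X, (∀ y : Y, pX x y = 0) → x = 0)
    (hYsep : ∀ y : Y, (∀ x : X, pX x y = 0) → y = 0)
    (hZsep : ∀ z : Z, (∀ w : W, pZ z w = 0) → z = 0)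
    (hWsep : ∀ w : W, (∀ z : Z, pZ z w = 0) → w = 0)
    (Kset : Set (Y × ℝ))
    (hK : Kset = {p : Y × ℝ | ∃ w ∈ Qstar, ∃ y ∈ Pstar, p.1 = c - Astar w - y ∧ p.2 ≤ pZ b w})
    (Mset : Set (Y × ℝ))
    (hM : Mset = {p : Y × ℝ | ∀ x ∈ FP, p.2 ≤ pX x (c - p.1)})
    (hFPne : FP.Nonempty)
    (hPclosed : @IsClosed X
      (TopologicalSpace.induced (fun x : X => (fun y : Y => pX x y)) Pi.topologicalSpace) P)
    (hQclosed : @IsClosed Z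
      (TopologicalSpace.induced (fun z : Z => (fun w : W => pZ z w)) Pi.topologicalSpace) Q) :
    @closure (Y × ℝ)
      (TopologicalSpace.induced
        (fun p : Y × ℝ => (fun q : X × ℝ => pX q.1 p.1 + p.2 * q.2))
        Pi.topologicalSpace) Kset = Mset :=
  closure_K_eq_M_general pX pZ A Astar hadj P Q hPcone hQcone b c Pstar hPstar Qstar hQstar FP hFP
    Kset hK Mset hM hFPne hPclosed hQclosed
end
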